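/- arXiv:1812.06189 — 6 statements merged into one kernel-verified Lean document; each statement's English description precedes it below -/
import Mathlib

section
/- For any random vector (Z_1, Z_2) in ℝ², the expectation of Hoeffding's kernel h_D evaluated at five i.i.d. copies of (Z_1,Z_2) is nonnegative, and the expectation of Blum–Kiefer–Rosenblatt's kernel h_R evaluated at six i.i.d. copies of (Z_1,Z_2) is nonnegative. -/
open Finset

noncomputable def ind (p : Prop) : ℝ := @ite ℝ p (Classical.propDecidable p) 1 0

/-- Hoeffding's `D` kernel (order 5). -/
noncomputable def hD (z : Fin 5 → ℝ × ℝ) : ℝ :=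
  (1/16) * ∑ σ : Equiv.Perm (Fin 5),
    ((ind ((z (σ 0)).1 ≤ (z (σ 4)).1) - ind ((z (σ 1)).1 ≤ (z (σ 4)).1)) *
     (ind ((z (σ 2)).1 ≤ (z (σ 4)).1) - ind ((z (σ 3)).1 ≤ (z (σ 4)).1)) *
     ((ind ((z (σ 0)).2 ≤ (z (σ 4)).2) - ind ((z (σ 1)).2 ≤ (z (σ 4)).2)) *
      (ind ((z (σ 2)).2 ≤ (z (σ 4)).2) - ind ((z (σ 3)).2 ≤ (z (σ 4)).2))))

/-- Blum–Kiefer–Rosenblatt's `R` kernel (order 6). -/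
noncomputable def hR (z : Fin 6 → ℝ × ℝ) : ℝ :=
  (1/32) * ∑ σ : Equiv.Perm (Fin 6),
    ((ind ((z (σ 0)).1 ≤ (z (σ 4)).1) - ind ((z (σ 1)).1 ≤ (z (σ 4)).1)) *
     (ind ((z (σ 2)).1 ≤ (z (σ 4)).1) - ind ((z (σ 3)).1 ≤ (z (σ 4)).1)) *
     ((ind ((z (σ 0)).2 ≤ (z (σ 5)).2) - ind ((z (σ 1)).2 ≤ (z (σ 5)).2)) *
      (ind ((z (σ 2)).2 ≤ (z (σ 5)).2) - ind ((z (σ 3)).2 ≤ (z (σ 5)).2))))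

/-- `1(x i, x j < x k, x l)`: all four strict inequalities hold. -/
noncomputable def aInd (x : Fin 4 → ℝ) (i j k l : Fin 4) : ℝ :=
  ind (x i < x k) * ind (x i < x l) * ind (x j < x k) * ind (x j < x l)

/-- Bergsma–Dassios–Yanagimoto's `τ*` kernel (order 4). -/
noncomputable def hTau (z : Fin 4 → ℝ × ℝ) : ℝ :=
  (1/16) * ∑ σ : Equiv.Perm (Fin 4),
    ((aInd (fun i => (z i).1) (σ 0) (σ 2) (σ 1) (σ 3) +
      aInd (fun i => (z i).1) (σ 1) (σ 3) (σ 0) (σ 2) -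
      aInd (fun i => (z i).1) (σ 0) (σ 3) (σ 1) (σ 2) -
      aInd (fun i => (z i).1) (σ 1) (σ 2) (σ 0) (σ 3)) *
     (aInd (fun i => (z i).2) (σ 0) (σ 2) (σ 1) (σ 3) +
      aInd (fun i => (z i).2) (σ 1) (σ 3) (σ 0) (σ 2) -
      aInd (fun i => (z i).2) (σ 0) (σ 3) (σ 1) (σ 2) -
      aInd (fun i => (z i).2) (σ 1) (σ 2) (σ 0) (σ 3)))

/-- `∑_{1 ≤ i₁ < ⋯ < i₅ ≤ 6} h_D(z_{i₁}, …, z_{i₅})`. -/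
noncomputable def sumD6 (z : Fin 6 → ℝ × ℝ) : ℝ :=
  ∑ s ∈ (Finset.powersetCard 5 (Finset.univ : Finset (Fin 6))).attach,
    hD (fun i => z (s.1.orderEmbOfFin (Finset.mem_powersetCard_univ.mp s.2) i))

/-- `∑_{1 ≤ i₁ < ⋯ < i₄ ≤ 6} h_{τ*}(z_{i₁}, …, z_{i₄})`. -/
noncomputable def sumTau6 (z : Fin 6 → ℝ × ℝ) : ℝ :=
  ∑ s ∈ (Finset.powersetCard 4 (Finset.univ : Finset (Fin 6))).attach,
    hTau (fun i => z (s.1.orderEmbOfFin (Finset.mem_powersetCard_univ.mp s.2) i))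

open MeasureTheory

open MeasureTheory
namespace HDaux

abbrev E := ℝ × ℝ

lemma ind_nonneg (p : Prop) : 0 ≤ ind p := by unfold ind; split <;> norm_num
lemma ind_le_one (p : Prop) : ind p ≤ 1 := by unfold ind; split <;> norm_num

lemma abs_ind_sub_le (p q : Prop) : |ind p - ind q| ≤ 1 := by
  rw [abs_le]; constructor <;> nlinarith [ind_nonneg p, ind_le_one p, ind_nonneg q, ind_le_one q]

lemma measurable_ind_le {α : Type*} [MeasurableSpace α] {f g : α → ℝ}
    (hf : Measurable f) (hg : Measurable g) :
    Measurable fun a => ind (f a ≤ g a) := by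
  have : (fun a => ind (f a ≤ g a)) =
      fun a => Set.indicator {a | f a ≤ g a} (fun _ => (1:ℝ)) a := by
    ext a
    by_cases h : f a ≤ g a <;> simp [ind, h]
  rw [this]
  exact (measurable_const.indicator (measurableSet_le hf hg))

/-- The basic kernel. -/
noncomputable def φ (a b c d : E) : ℝ :=
  (ind (a.1 ≤ c.1) - ind (b.1 ≤ c.1)) * (ind (a.2 ≤ d.2) - ind (b.2 ≤ d.2))

lemma abs_φ_le (a b c d : E) : |φ a b c d| ≤ 1 := by
  rw [φ, abs_mul]
  exact mul_le_one₀ (abs_ind_sub_le _ _) (abs_nonneg _) (abs_ind_sub_le _ _)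

lemma measurable_φ {α : Type*} [MeasurableSpace α] {f g h k : α → E}
    (hf : Measurable f) (hg : Measurable g) (hh : Measurable h) (hk : Measurable k) :
    Measurable fun x => φ (f x) (g x) (h x) (k x) := by
  apply Measurable.mul
  · exact (measurable_ind_le hf.fst hh.fst).sub (measurable_ind_le hg.fst hh.fst)
  · exact (measurable_ind_le hf.snd hk.snd).sub (measurable_ind_le hg.snd hk.snd)

lemma integrable_bdd {α : Type*} [MeasurableSpace α] {μ : Measure α} [IsFiniteMeasure μ]
    {f : α → ℝ} (hm : Measurable f) {C : ℝ} (h : ∀ x, |f x| ≤ C) : Integrable f μ :=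
  (integrable_const C).mono' hm.aestronglyMeasurable (Filter.Eventually.of_forall h)

lemma piCongrLeft_const_apply {ι ι' : Type*} (e : ι' ≃ ι) (q : ι' → E) (b : ι) :
    (Equiv.piCongrLeft (fun _ => E) e) q b = q (e.symm b) := by
  rw [Equiv.piCongrLeft_apply, eq_rec_constant]

/-- Fubini for a pi measure split along a sum type. -/
lemma pi_fubini {ι₁ ι₂ ι : Type*} [Fintype ι₁] [Fintype ι₂] [Fintype ι]
    (e : ι₁ ⊕ ι₂ ≃ ι) (μ : Measure E) [IsProbabilityMeasure μ]
    (f : (ι → E) → ℝ) (hfm : Measurable f) (hfb : ∀ x, |f x| ≤ 1) :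
    ∫ w, f w ∂(Measure.pi fun _ : ι => μ) =
      ∫ u : ι₁ → E, ∫ v : ι₂ → E, f (fun i => Sum.elim u v (e.symm i))
        ∂(Measure.pi fun _ : ι₂ => μ) ∂(Measure.pi fun _ : ι₁ => μ) := by
  have mp1 := measurePreserving_sumPiEquivProdPi_symm (fun _ : ι₁ ⊕ ι₂ => μ)
  have mp2 := measurePreserving_piCongrLeft (fun _ : ι => μ) e
  have mp := mp2.comp mp1
  have hemb := (MeasurableEquiv.piCongrLeft (fun _ : ι => E) e).measurableEmbedding.comp
    (MeasurableEquiv.sumPiEquivProdPi (fun _ : ι₁ ⊕ ι₂ => E)).symm.measurableEmbedding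
  rw [← mp.integral_comp hemb f]
  have key : ∀ p : (ι₁ → E) × (ι₂ → E),
      (MeasurableEquiv.piCongrLeft (fun _ : ι => E) e)
        ((MeasurableEquiv.sumPiEquivProdPi (fun _ : ι₁ ⊕ ι₂ => E)).symm p)
        = fun i => Sum.elim p.1 p.2 (e.symm i) := by
    intro p
    funext i
    rw [MeasurableEquiv.coe_piCongrLeft, piCongrLeft_const_apply]
    rw [MeasurableEquiv.coe_sumPiEquivProdPi_symm]
    cases h : e.symm i <;> simp
  rw [integral_prod]
  · apply integral_congr_ae; filter_upwards with u
    apply integral_congr_ae; filter_upwards with v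
    simp only [Function.comp_apply, key (u, v)]
  · apply integrable_bdd
    · exact hfm.comp mp.measurable
    · intro x; exact hfb _

/-- The square-factorization lemma over `Fin 2 ⊕ Fin 2 ≃ Fin 4`. -/
lemma integral_pair_sq (μ : Measure E) [IsProbabilityMeasure μ] (f : E → E → ℝ)
    (hfm : Measurable fun p : E × E => f p.1 p.2) (hfb : ∀ a b, |f a b| ≤ 1) :
    ∫ v : Fin 4 → E, f (v 0) (v 1) * f (v 2) (v 3) ∂(Measure.pi fun _ => μ) =
      (∫ x : Fin 2 → E, f (x 0) (x 1) ∂(Measure.pi fun _ => μ))^2 := by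
  have hm : Measurable fun v : Fin 4 → E => f (v 0) (v 1) * f (v 2) (v 3) := by
    have h1 : Measurable fun v : Fin 4 → E => ((v 0, v 1) : E × E) :=
      (measurable_pi_apply 0).prodMk (measurable_pi_apply 1)
    have h2 : Measurable fun v : Fin 4 → E => ((v 2, v 3) : E × E) :=
      (measurable_pi_apply 2).prodMk (measurable_pi_apply 3)
    exact (hfm.comp h1).mul (hfm.comp h2)
  have hb : ∀ v : Fin 4 → E, |f (v 0) (v 1) * f (v 2) (v 3)| ≤ 1 := by
    intro v; rw [abs_mul]
    exact mul_le_one₀ (hfb _ _) (abs_nonneg _) (hfb _ _)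
  rw [pi_fubini (finSumFinEquiv : Fin 2 ⊕ Fin 2 ≃ Fin 4) μ _ hm hb]
  have s0 : (finSumFinEquiv : Fin 2 ⊕ Fin 2 ≃ Fin 4).symm (0 : Fin 4) = Sum.inl 0 := by decide
  have s1 : (finSumFinEquiv : Fin 2 ⊕ Fin 2 ≃ Fin 4).symm (1 : Fin 4) = Sum.inl 1 := by decide
  have s2 : (finSumFinEquiv : Fin 2 ⊕ Fin 2 ≃ Fin 4).symm (2 : Fin 4) = Sum.inr 0 := by decide
  have s3 : (finSumFinEquiv : Fin 2 ⊕ Fin 2 ≃ Fin 4).symm (3 : Fin 4) = Sum.inr 1 := by decide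
  simp only [s0, s1, s2, s3, Sum.elim_inl, Sum.elim_inr]
  rw [sq]
  calc ∫ u : Fin 2 → E, ∫ v : Fin 2 → E, f (u 0) (u 1) * f (v 0) (v 1)
        ∂(Measure.pi fun _ => μ) ∂(Measure.pi fun _ => μ)
      = ∫ u : Fin 2 → E, f (u 0) (u 1) * ∫ v : Fin 2 → E, f (v 0) (v 1)
        ∂(Measure.pi fun _ => μ) ∂(Measure.pi fun _ => μ) := by
        congr 1; funext u; exact integral_const_mul _ _
    _ = (∫ x : Fin 2 → E, f (x 0) (x 1) ∂(Measure.pi fun _ => μ)) *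
        (∫ x : Fin 2 → E, f (x 0) (x 1) ∂(Measure.pi fun _ => μ)) := by
        rw [integral_mul_const]

/-- Composition with a permutation preserves the integral over an iid pi measure. -/
lemma integral_comp_perm {n : ℕ} (μ : Measure E) [IsProbabilityMeasure μ]
    (f : (Fin n → E) → ℝ) (σ : Equiv.Perm (Fin n)) :
    ∫ w, f (w ∘ σ) ∂(Measure.pi fun _ : Fin n => μ) =
      ∫ w, f w ∂(Measure.pi fun _ : Fin n => μ) := by
  have mp := measurePreserving_piCongrLeft (fun _ : Fin n => μ) (σ.symm : Fin n ≃ Fin n)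
  have h := mp.integral_comp
    (MeasurableEquiv.piCongrLeft (fun _ : Fin n => E) (σ.symm : Fin n ≃ Fin n)).measurableEmbedding f
  rw [← h]
  apply integral_congr_ae; filter_upwards with w
  congr 1
  funext i
  rw [MeasurableEquiv.coe_piCongrLeft, piCongrLeft_const_apply]
  simp

/-- Hoeffding D core term. -/
noncomputable def T5 : (Fin 5 → E) → ℝ :=
  fun w => φ (w 0) (w 1) (w 4) (w 4) * φ (w 2) (w 3) (w 4) (w 4)

/-- BKR core term. -/
noncomputable def T6 : (Fin 6 → E) → ℝ :=
  fun w => φ (w 0) (w 1) (w 4) (w 5) * φ (w 2) (w 3) (w 4) (w 5)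

lemma measurable_T5 : Measurable T5 :=
  (measurable_φ (measurable_pi_apply _) (measurable_pi_apply _) (measurable_pi_apply _)
    (measurable_pi_apply _)).mul
  (measurable_φ (measurable_pi_apply _) (measurable_pi_apply _) (measurable_pi_apply _)
    (measurable_pi_apply _))

lemma measurable_T6 : Measurable T6 :=
  (measurable_φ (measurable_pi_apply _) (measurable_pi_apply _) (measurable_pi_apply _)
    (measurable_pi_apply _)).mul
  (measurable_φ (measurable_pi_apply _) (measurable_pi_apply _) (measurable_pi_apply _)
    (measurable_pi_apply _))

lemma abs_T5_le (w : Fin 5 → E) : |T5 w| ≤ 1 := by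
  rw [T5, abs_mul]; exact mul_le_one₀ (abs_φ_le _ _ _ _) (abs_nonneg _) (abs_φ_le _ _ _ _)

lemma abs_T6_le (w : Fin 6 → E) : |T6 w| ≤ 1 := by
  rw [T6, abs_mul]; exact mul_le_one₀ (abs_φ_le _ _ _ _) (abs_nonneg _) (abs_φ_le _ _ _ _)

lemma integral_T5_nonneg (μ : Measure E) [IsProbabilityMeasure μ] :
    0 ≤ ∫ w, T5 w ∂(Measure.pi fun _ : Fin 5 => μ) := by
  set e : Fin 1 ⊕ Fin 4 ≃ Fin 5 := (Equiv.sumComm (Fin 1) (Fin 4)).trans finSumFinEquiv with he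
  rw [pi_fubini e μ T5 measurable_T5 abs_T5_le]
  refine integral_nonneg fun u => ?_
  dsimp only [Pi.zero_apply]
  have s0 : e.symm (0 : Fin 5) = Sum.inr 0 := by rw [he]; decide
  have s1 : e.symm (1 : Fin 5) = Sum.inr 1 := by rw [he]; decide
  have s2 : e.symm (2 : Fin 5) = Sum.inr 2 := by rw [he]; decide
  have s3 : e.symm (3 : Fin 5) = Sum.inr 3 := by rw [he]; decide
  have s4 : e.symm (4 : Fin 5) = Sum.inl 0 := by rw [he]; decide
  have : (fun v : Fin 4 → E => T5 (fun i => Sum.elim u v (e.symm i))) =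
      fun v => φ (v 0) (v 1) (u 0) (u 0) * φ (v 2) (v 3) (u 0) (u 0) := by
    funext v
    simp only [T5, s0, s1, s2, s3, s4, Sum.elim_inl, Sum.elim_inr]
  rw [this, integral_pair_sq μ (fun a b => φ a b (u 0) (u 0))
    (measurable_φ measurable_fst measurable_snd measurable_const measurable_const)
    (fun a b => abs_φ_le _ _ _ _)]
  positivity

lemma integral_T6_nonneg (μ : Measure E) [IsProbabilityMeasure μ] :
    0 ≤ ∫ w, T6 w ∂(Measure.pi fun _ : Fin 6 => μ) := by
  set e : Fin 2 ⊕ Fin 4 ≃ Fin 6 := (Equiv.sumComm (Fin 2) (Fin 4)).trans finSumFinEquiv with he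
  rw [pi_fubini e μ T6 measurable_T6 abs_T6_le]
  refine integral_nonneg fun u => ?_
  dsimp only [Pi.zero_apply]
  have s0 : e.symm (0 : Fin 6) = Sum.inr 0 := by rw [he]; decide
  have s1 : e.symm (1 : Fin 6) = Sum.inr 1 := by rw [he]; decide
  have s2 : e.symm (2 : Fin 6) = Sum.inr 2 := by rw [he]; decide
  have s3 : e.symm (3 : Fin 6) = Sum.inr 3 := by rw [he]; decide
  have s4 : e.symm (4 : Fin 6) = Sum.inl 0 := by rw [he]; decide
  have s5 : e.symm (5 : Fin 6) = Sum.inl 1 := by rw [he]; decide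
  have : (fun v : Fin 4 → E => T6 (fun i => Sum.elim u v (e.symm i))) =
      fun v => φ (v 0) (v 1) (u 0) (u 1) * φ (v 2) (v 3) (u 0) (u 1) := by
    funext v
    simp only [T6, s0, s1, s2, s3, s4, s5, Sum.elim_inl, Sum.elim_inr]
  rw [this, integral_pair_sq μ (fun a b => φ a b (u 0) (u 1))
    (measurable_φ measurable_fst measurable_snd measurable_const measurable_const)
    (fun a b => abs_φ_le _ _ _ _)]
  positivity

end HDaux

/-- for any random vector `(Z₁, Z₂)` in `ℝ²` with law `ν`,
`E h_D ≥ 0` and `E h_R ≥ 0`, the expectations being over 5 (resp. 6) i.i.d. copies. -/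
theorem hoeffdingD_nonneg_and_BKR_nonneg
    (ν : Measure (ℝ × ℝ)) [IsProbabilityMeasure ν] :
    0 ≤ ∫ w : Fin 5 → ℝ × ℝ, hD w ∂(Measure.pi fun _ => ν) ∧
    0 ≤ ∫ w : Fin 6 → ℝ × ℝ, hR w ∂(Measure.pi fun _ => ν) := by
  constructor
  · have hDrw : ∀ w : Fin 5 → ℝ × ℝ,
        hD w = (1/16) * ∑ σ : Equiv.Perm (Fin 5), HDaux.T5 (w ∘ σ) := by
      intro w
      rw [hD]
      congr 1
      refine Finset.sum_congr rfl fun σ _ => ?_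
      simp only [HDaux.T5, HDaux.φ, Function.comp_apply]
      ring
    simp_rw [hDrw]
    have hint : ∀ σ ∈ (Finset.univ : Finset (Equiv.Perm (Fin 5))),
        MeasureTheory.Integrable (fun w : Fin 5 → ℝ × ℝ => HDaux.T5 (w ∘ σ))
          (Measure.pi fun _ => ν) := fun σ _ =>
      HDaux.integrable_bdd (HDaux.measurable_T5.comp
        (measurable_pi_lambda _ fun i => measurable_pi_apply (σ i)))
        (fun w => HDaux.abs_T5_le (w ∘ σ))
    rw [MeasureTheory.integral_const_mul, MeasureTheory.integral_finset_sum _ hint]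
    apply mul_nonneg (by norm_num)
    refine Finset.sum_nonneg fun σ _ => ?_
    rw [HDaux.integral_comp_perm]
    exact HDaux.integral_T5_nonneg ν
  · have hRrw : ∀ w : Fin 6 → ℝ × ℝ,
        hR w = (1/32) * ∑ σ : Equiv.Perm (Fin 6), HDaux.T6 (w ∘ σ) := by
      intro w
      rw [hR]
      congr 1
      refine Finset.sum_congr rfl fun σ _ => ?_
      simp only [HDaux.T6, HDaux.φ, Function.comp_apply]
      ring
    simp_rw [hRrw]
    have hint : ∀ σ ∈ (Finset.univ : Finset (Equiv.Perm (Fin 6))),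
        MeasureTheory.Integrable (fun w : Fin 6 → ℝ × ℝ => HDaux.T6 (w ∘ σ))
          (Measure.pi fun _ => ν) := fun σ _ =>
      HDaux.integrable_bdd (HDaux.measurable_T6.comp
        (measurable_pi_lambda _ fun i => measurable_pi_apply (σ i)))
        (fun w => HDaux.abs_T6_le (w ∘ σ))
    rw [MeasureTheory.integral_const_mul, MeasureTheory.integral_finset_sum _ hint]
    apply mul_nonneg (by norm_num)
    refine Finset.sum_nonneg fun σ _ => ?_
    rw [HDaux.integral_comp_perm]
    exact HDaux.integral_T6_nonneg ν
end

section
/- Let (X,Y) be uniformly distributed on the unit circle {(x,y) ∈ ℝ² : x²+y²=1}. Then 30·∫(F(x,y) − F₁(x)F₂(y))² dF(x,y) = 1/16, where F is the joint CDF of (X,Y) and F₁, F₂ are the marginal CDFs; i.e., Hoeffding's D correlation measure of (X,Y) equals 1/16. -/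
/-!
Parametrize the circle by `θ ∈ [0, 2π)`. Since `cos` decreases in `|u|` on `[-π, π]`, the
comparisons `cos φ ≤ cos θ` and `sin φ ≤ sin θ` become comparisons of the distances of `φ` and `θ`
to `π`, `π/2` or `3π/2`. So for `θ = kπ/2 + s` inside the `k`-th quadrant the events
`{X ≤ cos θ}`, `{Y ≤ sin θ}` and their intersection are, up to a point, arcs or complements of
arcs whose lengths are affine in `s`, and `F - F₁F₂ = ± s (s - π/2) / π²` at `(cos θ, sin θ)`.
Hence `D = 30 · (2π)⁻¹ · 4 ∫₀^{π/2} s² (s - π/2)² / π⁴ ds = 30 · (2π)⁻¹ · 4 (π/2)⁵ / (30 π⁴) = 1/16`.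
-/

open MeasureTheory

noncomputable def circleUniform : Measure (ℝ × ℝ) :=
  Measure.map (fun θ : ℝ => (Real.cos θ, Real.sin θ))
    ((ENNReal.ofReal (2 * Real.pi))⁻¹ • volume.restrict (Set.Ico 0 (2 * Real.pi)))

noncomputable def circF (x y : ℝ) : ℝ :=
  (circleUniform (Set.Iic x ×ˢ Set.Iic y)).toReal

noncomputable def circF₁ (x : ℝ) : ℝ := ((circleUniform.map Prod.fst) (Set.Iic x)).toReal

noncomputable def circF₂ (y : ℝ) : ℝ := ((circleUniform.map Prod.snd) (Set.Iic y)).toReal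

open ProbabilityTheory Real Set

theorem Real.cos_le_cos_iff_abs_le {u v : ℝ} (hu : |u| ≤ π) (hv : |v| ≤ π) :
    cos u ≤ cos v ↔ |v| ≤ |u| := by
  rw [← cos_abs u, ← cos_abs v]
  exact strictAntiOn_cos.le_iff_ge ⟨abs_nonneg u, hu⟩ ⟨abs_nonneg v, hv⟩

theorem Real.cos_le_cos_iff_abs_sub_pi_le {x y : ℝ} (hx : |x - π| ≤ π) (hy : |y - π| ≤ π) :
    cos x ≤ cos y ↔ |x - π| ≤ |y - π| := by
  rw [← neg_le_neg_iff, ← cos_sub_pi, ← cos_sub_pi, cos_le_cos_iff_abs_le hy hx]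

theorem Real.sin_le_sin_iff_abs_sub_pi_div_two_le {x y : ℝ} (hx : |x - π / 2| ≤ π)
    (hy : |y - π / 2| ≤ π) : sin x ≤ sin y ↔ |y - π / 2| ≤ |x - π / 2| := by
  rw [← cos_sub_pi_div_two, ← cos_sub_pi_div_two, cos_le_cos_iff_abs_le hx hy]

theorem Real.sin_le_sin_iff_abs_sub_three_pi_div_two_le {x y : ℝ} (hx : |x - 3 * π / 2| ≤ π)
    (hy : |y - 3 * π / 2| ≤ π) : sin x ≤ sin y ↔ |x - 3 * π / 2| ≤ |y - 3 * π / 2| := by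
  have h (z : ℝ) : sin z = -cos (z - 3 * π / 2) := by
    rw [show z - 3 * π / 2 = z - π / 2 - π by ring, cos_sub_pi, cos_sub_pi_div_two, neg_neg]
  rw [h x, h y, neg_le_neg_iff, cos_le_cos_iff_abs_le hy hx]

theorem Real.sin_nonpos_of_pi_le_of_le_two_pi {x : ℝ} (h₁ : π ≤ x) (h₂ : x ≤ 2 * π) :
    sin x ≤ 0 := by
  simpa using sin_nonpos_of_nonpos_of_neg_pi_le (x := x - 2 * π) (by linarith) (by linarith)

theorem Real.sin_neg_of_pi_lt_of_lt_two_pi {x : ℝ} (h₁ : π < x) (h₂ : x < 2 * π) : sin x < 0 := by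
  simpa using sin_neg_of_neg_of_neg_pi_lt (x := x - 2 * π) (by linarith) (by linarith)

theorem cond_Ico_real_eq_of_Ioo_subset {S : Set ℝ} {a b c d e : ℝ} (hca : c ≤ a) (hab : a ≤ b)
    (hbd : b ≤ d) (hlo : Ioo a b ⊆ S) (hhi : S ∩ Ioo c d ⊆ insert e (Icc a b)) :
    (volume[|Ico c d]).real S = (b - a) / (d - c) := by
  have hvol : volume (Ico c d ∩ S) = ENNReal.ofReal (b - a) := by
    apply le_antisymm
    · calc volume (Ico c d ∩ S) ≤ volume (insert c (insert e (Icc a b))) := by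
            refine measure_mono fun x ⟨⟨hcx, hxd⟩, hxS⟩ => ?_
            rcases hcx.eq_or_lt with rfl | hcx
            · exact mem_insert _ _
            · exact mem_insert_of_mem _ (hhi ⟨hxS, hcx, hxd⟩)
        _ = ENNReal.ofReal (b - a) := by
          rw [measure_congr (insert_ae_eq_self _ _), measure_congr (insert_ae_eq_self _ _),
            Real.volume_Icc]
    · rw [← Real.volume_Ioo]
      exact measure_mono fun x hx => ⟨⟨hca.trans hx.1.le, hx.2.trans_le hbd⟩, hlo hx⟩
  rw [measureReal_def, cond_apply measurableSet_Ico, hvol, Real.volume_Ico, ENNReal.toReal_mul,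
    ENNReal.toReal_inv, ENNReal.toReal_ofReal (by linarith), ENNReal.toReal_ofReal (by linarith),
    div_eq_inv_mul]

instance : IsProbabilityMeasure (volume[|Ico 0 (2 * π)]) :=
  cond_isProbabilityMeasure_of_finite (by simp [Real.volume_Ico, pi_pos])
    (by rw [Real.volume_Ico]; exact ENNReal.ofReal_ne_top)

theorem circleUniform_eq_map_cond :
    circleUniform = (volume[|Ico 0 (2 * π)]).map fun θ => (cos θ, sin θ) := by
  simp [circleUniform, ProbabilityTheory.cond, Real.volume_Ico]

instance : IsProbabilityMeasure circleUniform := by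
  rw [circleUniform_eq_map_cond]
  exact Measure.isProbabilityMeasure_map (by fun_prop)

theorem circF_eq (x y : ℝ) :
    circF x y = (volume[|Ico 0 (2 * π)]).real {θ | cos θ ≤ x ∧ sin θ ≤ y} := by
  rw [circF, circleUniform_eq_map_cond, Measure.map_apply (by fun_prop)
    (measurableSet_Iic.prod measurableSet_Iic)]
  rfl

theorem circF₁_eq (x : ℝ) : circF₁ x = (volume[|Ico 0 (2 * π)]).real {θ | cos θ ≤ x} := by
  rw [circF₁, circleUniform_eq_map_cond, Measure.map_map (by fun_prop) (by fun_prop),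
    Measure.map_apply (by fun_prop) measurableSet_Iic]
  rfl

theorem circF₂_eq (y : ℝ) : circF₂ y = (volume[|Ico 0 (2 * π)]).real {θ | sin θ ≤ y} := by
  rw [circF₂, circleUniform_eq_map_cond, Measure.map_map (by fun_prop) (by fun_prop),
    Measure.map_apply (by fun_prop) measurableSet_Iic]
  rfl

theorem circF₁_cos {t : ℝ} (ht : t ∈ Icc 0 (2 * π)) : circF₁ (cos t) = |t - π| / π := by
  have htπ : |t - π| ≤ π := abs_le.2 ⟨by linarith [ht.1], by linarith [ht.2]⟩
  rw [circF₁_eq, cond_Ico_real_eq_of_Ioo_subset (a := π - |t - π|) (b := π + |t - π|) (e := 0)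
    (by linarith) (by linarith [abs_nonneg (t - π)]) (by linarith)]
  · field_simp
    ring
  · rintro x ⟨hx₁, hx₂⟩
    rw [mem_ofPred_eq, cos_le_cos_iff_abs_sub_pi_le (abs_le.2 ⟨by linarith, by linarith⟩) htπ,
      abs_sub_le_iff]
    constructor <;> linarith
  · rintro x ⟨hcos, hx₀, hx₂π⟩
    rw [mem_ofPred_eq, cos_le_cos_iff_abs_sub_pi_le (abs_le.2 ⟨by linarith, by linarith⟩) htπ,
      abs_sub_le_iff] at hcos
    exact mem_insert_of_mem _ ⟨by linarith, by linarith⟩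

theorem circF₂_sin_of_mem_Ioo_zero_pi {t : ℝ} (ht : t ∈ Ioo 0 π) :
    circF₂ (sin t) = 1 - |t - π / 2| / π := by
  obtain ⟨ht₀, htπ⟩ := ht
  have ht' : |t - π / 2| < π / 2 := abs_sub_lt_iff.2 ⟨by linarith, by linarith⟩
  -- `{sin ≤ sin t}` wraps around `0`; its complement is the arc centred at `π / 2`.
  have hcompl : {θ | sin θ ≤ sin t} = {θ | sin t < sin θ}ᶜ := by ext; simp
  rw [circF₂_eq, hcompl, probReal_compl_eq_one_sub (measurableSet_lt (by fun_prop) (by fun_prop)),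
    cond_Ico_real_eq_of_Ioo_subset (a := π / 2 - |t - π / 2|) (b := π / 2 + |t - π / 2|) (e := 0)
      (by linarith) (by linarith [abs_nonneg (t - π / 2)]) (by linarith)]
  · field_simp
    ring
  · rintro x ⟨hx₁, hx₂⟩
    rw [mem_ofPred_eq, ← not_le, sin_le_sin_iff_abs_sub_pi_div_two_le
      (abs_le.2 ⟨by linarith, by linarith⟩) (by linarith), not_le, abs_sub_lt_iff]
    constructor <;> linarith
  · rintro x ⟨hsin, hx₀, hx₂π⟩
    have hxπ : x < π := lt_of_not_ge fun h => (sin_nonpos_of_pi_le_of_le_two_pi h hx₂π.le).not_gt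
      ((sin_pos_of_pos_of_lt_pi ht₀ htπ).trans hsin)
    rw [mem_ofPred_eq, ← not_le, sin_le_sin_iff_abs_sub_pi_div_two_le
      (abs_le.2 ⟨by linarith, by linarith⟩) (by linarith), not_le, abs_sub_lt_iff] at hsin
    exact mem_insert_of_mem _ ⟨by linarith, by linarith⟩

theorem circF₂_sin_of_mem_Ioo_pi_two_pi {t : ℝ} (ht : t ∈ Ioo π (2 * π)) :
    circF₂ (sin t) = |t - 3 * π / 2| / π := by
  obtain ⟨htπ, ht₂π⟩ := ht
  have ht' : |t - 3 * π / 2| < π / 2 := abs_sub_lt_iff.2 ⟨by linarith, by linarith⟩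
  rw [circF₂_eq, cond_Ico_real_eq_of_Ioo_subset (a := 3 * π / 2 - |t - 3 * π / 2|)
    (b := 3 * π / 2 + |t - 3 * π / 2|) (e := 0) (by linarith)
    (by linarith [abs_nonneg (t - 3 * π / 2)]) (by linarith)]
  · field_simp
    ring
  · rintro x ⟨hx₁, hx₂⟩
    rw [mem_ofPred_eq, sin_le_sin_iff_abs_sub_three_pi_div_two_le
      (abs_le.2 ⟨by linarith, by linarith⟩) (by linarith), abs_sub_le_iff]
    constructor <;> linarith
  · rintro x ⟨hsin, hx₀, hx₂π⟩
    have hπx : π < x := lt_of_not_ge fun h => (sin_nonneg_of_nonneg_of_le_pi hx₀.le h).not_gt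
      (hsin.trans_lt (sin_neg_of_pi_lt_of_lt_two_pi htπ ht₂π))
    rw [mem_ofPred_eq, sin_le_sin_iff_abs_sub_three_pi_div_two_le
      (abs_le.2 ⟨by linarith, by linarith⟩) (by linarith), abs_sub_le_iff] at hsin
    exact mem_insert_of_mem _ ⟨by linarith, by linarith⟩

theorem circF_cos_sin_of_mem_Ioo_zero_pi_div_two {t : ℝ} (ht : t ∈ Ioo 0 (π / 2)) :
    circF (cos t) (sin t) = 1 / 2 := by
  obtain ⟨ht₀, htπ⟩ := ht
  have habs : |t - π| = π - t := by rw [abs_sub_comm, abs_of_pos (by linarith)]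
  have habs' : |t - π / 2| = π / 2 - t := by rw [abs_sub_comm, abs_of_pos (by linarith)]
  rw [circF_eq, cond_Ico_real_eq_of_Ioo_subset (a := π - t) (b := 2 * π - t) (e := t)
    (by linarith) (by linarith) (by linarith)]
  · field_simp
    ring
  · rintro x ⟨hx₁, hx₂⟩
    constructor
    · rw [cos_le_cos_iff_abs_sub_pi_le (abs_le.2 ⟨by linarith, by linarith⟩) (by linarith), habs,
        abs_sub_le_iff]
      constructor <;> linarith
    rcases lt_or_ge x π with hxπ | hπx
    · rw [sin_le_sin_iff_abs_sub_pi_div_two_le (abs_le.2 ⟨by linarith, by linarith⟩)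
        (by linarith), habs', abs_of_pos (by linarith)]
      linarith
    · exact (sin_nonpos_of_pi_le_of_le_two_pi hπx (by linarith)).trans
        (sin_pos_of_pos_of_lt_pi ht₀ (by linarith)).le
  · rintro x ⟨⟨hcos, hsin⟩, hx₀, hx₂π⟩
    rw [cos_le_cos_iff_abs_sub_pi_le (abs_le.2 ⟨by linarith, by linarith⟩) (by linarith), habs,
      abs_sub_le_iff] at hcos
    rcases lt_or_ge x (π - t) with hx | hx
    · rw [sin_le_sin_iff_abs_sub_pi_div_two_le (abs_le.2 ⟨by linarith, by linarith⟩)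
        (by linarith), habs', le_abs] at hsin
      exact .inl (by rcases hsin with h | h <;> linarith)
    · exact mem_insert_of_mem _ ⟨hx, by linarith⟩

theorem circF_cos_sin_of_mem_Ioo_pi_div_two_pi {t : ℝ} (ht : t ∈ Ioo (π / 2) π) :
    circF (cos t) (sin t) = (π - t) / π := by
  obtain ⟨ht₀, htπ⟩ := ht
  have habs : |t - π| = π - t := by rw [abs_sub_comm, abs_of_pos (by linarith)]
  rw [circF_eq, cond_Ico_real_eq_of_Ioo_subset (a := t) (b := 2 * π - t) (e := t)
    (by linarith) (by linarith) (by linarith)]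
  · field_simp
    ring
  · rintro x ⟨hx₁, hx₂⟩
    constructor
    · rw [cos_le_cos_iff_abs_sub_pi_le (abs_le.2 ⟨by linarith, by linarith⟩) (by linarith), habs,
        abs_sub_le_iff]
      constructor <;> linarith
    · rw [sin_le_sin_iff_abs_sub_pi_div_two_le (abs_le.2 ⟨by linarith, by linarith⟩)
        (abs_le.2 ⟨by linarith, by linarith⟩), abs_of_pos (by linarith), abs_of_pos (by linarith)]
      linarith
  · rintro x ⟨⟨hcos, -⟩, hx₀, hx₂π⟩
    rw [cos_le_cos_iff_abs_sub_pi_le (abs_le.2 ⟨by linarith, by linarith⟩) (by linarith), habs,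
      abs_sub_le_iff] at hcos
    exact mem_insert_of_mem _ ⟨by linarith, by linarith⟩

theorem circF_cos_sin_of_mem_Ioo_pi_three_pi_div_two {t : ℝ} (ht : t ∈ Ioo π (3 * π / 2)) :
    circF (cos t) (sin t) = 0 := by
  obtain ⟨htπ, ht₃π⟩ := ht
  have habs : |t - π| = t - π := abs_of_pos (by linarith)
  have habs' : |t - 3 * π / 2| = 3 * π / 2 - t := by rw [abs_sub_comm, abs_of_pos (by linarith)]
  rw [circF_eq, cond_Ico_real_eq_of_Ioo_subset (a := t) (b := t) (e := t)
    (by linarith) le_rfl (by linarith)]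
  · simp
  · simp
  · rintro x ⟨⟨hcos, hsin⟩, hx₀, hx₂π⟩
    rw [cos_le_cos_iff_abs_sub_pi_le (abs_le.2 ⟨by linarith, by linarith⟩) (by linarith), habs,
      abs_sub_le_iff] at hcos
    rw [sin_le_sin_iff_abs_sub_three_pi_div_two_le (abs_le.2 ⟨by linarith, by linarith⟩)
      (by linarith), habs', abs_sub_le_iff] at hsin
    exact mem_insert_of_mem _ ⟨by linarith, by linarith⟩

theorem circF_cos_sin_of_mem_Ioo_three_pi_div_two_two_pi {t : ℝ}
    (ht : t ∈ Ioo (3 * π / 2) (2 * π)) : circF (cos t) (sin t) = (t - 3 * π / 2) / π := by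
  obtain ⟨ht₃π, ht₂π⟩ := ht
  have habs : |t - π| = t - π := abs_of_pos (by linarith)
  have habs' : |t - 3 * π / 2| = t - 3 * π / 2 := abs_of_pos (by linarith)
  rw [circF_eq, cond_Ico_real_eq_of_Ioo_subset (a := 3 * π - t) (b := t) (e := t)
    (by linarith) (by linarith) (by linarith)]
  · field_simp
    ring
  · rintro x ⟨hx₁, hx₂⟩
    constructor
    · rw [cos_le_cos_iff_abs_sub_pi_le (abs_le.2 ⟨by linarith, by linarith⟩) (by linarith), habs,
        abs_sub_le_iff]
      constructor <;> linarith
    · rw [sin_le_sin_iff_abs_sub_three_pi_div_two_le (abs_le.2 ⟨by linarith, by linarith⟩)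
        (by linarith), habs', abs_sub_le_iff]
      constructor <;> linarith
  · rintro x ⟨⟨hcos, hsin⟩, hx₀, hx₂π⟩
    have hπx : π < x := lt_of_not_ge fun h => (sin_nonneg_of_nonneg_of_le_pi hx₀.le h).not_gt
      (hsin.trans_lt (sin_neg_of_pi_lt_of_lt_two_pi (by linarith) ht₂π))
    rw [cos_le_cos_iff_abs_sub_pi_le (abs_le.2 ⟨by linarith, by linarith⟩) (by linarith), habs,
      abs_sub_le_iff] at hcos
    rw [sin_le_sin_iff_abs_sub_three_pi_div_two_le (abs_le.2 ⟨by linarith, by linarith⟩)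
      (by linarith), habs', abs_sub_le_iff] at hsin
    exact mem_insert_of_mem _ ⟨by linarith, by linarith⟩

theorem measurable_measure_Iic_prod_Iic (μ : Measure (ℝ × ℝ)) [SFinite μ] :
    Measurable fun p : ℝ × ℝ => μ (Iic p.1 ×ˢ Iic p.2) :=
  measurable_measure_prodMk_left <| (measurableSet_le measurable_snd.fst measurable_fst.fst).inter
    (measurableSet_le measurable_snd.snd measurable_fst.snd)

theorem monotone_circF₁ : Monotone circF₁ := fun x y hxy => by
  simp only [circF₁_eq]
  exact measureReal_mono fun θ hθ => le_trans hθ hxy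

theorem monotone_circF₂ : Monotone circF₂ := fun x y hxy => by
  simp only [circF₂_eq]
  exact measureReal_mono fun θ hθ => le_trans hθ hxy

theorem integral_circleUniform {f : ℝ × ℝ → ℝ} (hf : Measurable f) :
    ∫ p, f p ∂circleUniform = (2 * π)⁻¹ * ∫ θ in 0..2 * π, f (cos θ, sin θ) := by
  rw [circleUniform, integral_map (by fun_prop) hf.aestronglyMeasurable, integral_smul_measure,
    ENNReal.toReal_inv, ENNReal.toReal_ofReal (by positivity), smul_eq_mul,
    intervalIntegral.integral_of_le (by positivity), integral_Ico_eq_integral_Ioo,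
    integral_Ioc_eq_integral_Ioo]

theorem intervalIntegral_eq_mul_of_eqOn_translates {g h : ℝ → ℝ} {L : ℝ} (hL : 0 ≤ L) (n : ℕ)
    (hh : Continuous h) (hg : ∀ k < n, ∀ s ∈ Ioo 0 L, g (k * L + s) = h s) :
    ∫ x in 0..n * L, g x = n * ∫ s in 0..L, h s := by
  have hpiece (k : ℕ) (hk : k < n) :
      EqOn (fun x => h (x - k * L)) g (uIoo (k * L) ((k + 1 : ℕ) * L)) := by
    intro x hx
    rw [uIoo_of_le (by gcongr; omega)] at hx
    push_cast at hx
    change h (x - k * L) = g x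
    rw [← hg k hk (x - k * L) ⟨by linarith [hx.1], by linarith [hx.2]⟩, add_sub_cancel]
  have hint (k : ℕ) (hk : k < n) : IntervalIntegrable g volume (k * L) ((k + 1 : ℕ) * L) :=
    (hh.comp (continuous_sub_right _)).intervalIntegrable _ _ |>.congr_uIoo (hpiece k hk)
  have hpiece_integral (k : ℕ) (hk : k < n) :
      ∫ x in k * L..(k + 1 : ℕ) * L, g x = ∫ s in 0..L, h s := by
    have := intervalIntegral.integral_comp_add_left g (a := 0) (b := L) (k * L)
    rw [add_zero] at this
    rw [show ((k + 1 : ℕ) : ℝ) * L = k * L + L by push_cast; ring, ← this]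
    exact intervalIntegral.integral_congr_uIoo fun s hs => by
      rw [uIoo_of_le hL] at hs; exact hg k hk s hs
  have := intervalIntegral.sum_integral_adjacent_intervals (a := fun k : ℕ => k * L) hint
  simp only [Nat.cast_zero, zero_mul] at this
  rw [← this, Finset.sum_congr rfl fun k hk => hpiece_integral k (Finset.mem_range.1 hk),
    Finset.sum_const, Finset.card_range, nsmul_eq_mul]

theorem integral_sq_mul_sub_sq (L : ℝ) : ∫ x in 0..L, (x * (x - L)) ^ 2 = L ^ 5 / 30 := by
  have : (fun x : ℝ => (x * (x - L)) ^ 2) = fun x => x ^ 4 - 2 * L * x ^ 3 + L ^ 2 * x ^ 2 := by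
    ext x; ring
  rw [this, intervalIntegral.integral_add, intervalIntegral.integral_sub,
    intervalIntegral.integral_const_mul, intervalIntegral.integral_const_mul, integral_pow,
    integral_pow, integral_pow]
  · ring
  all_goals exact Continuous.intervalIntegrable (by fun_prop) _ _

theorem circF_sub_mul_sq_of_mem_quadrant {k : ℕ} (hk : k < 4) {s : ℝ} (hs : s ∈ Ioo 0 (π / 2)) :
    (circF (cos (k * (π / 2) + s)) (sin (k * (π / 2) + s)) -
        circF₁ (cos (k * (π / 2) + s)) * circF₂ (sin (k * (π / 2) + s))) ^ 2 =
      (s * (s - π / 2)) ^ 2 / π ^ 4 := by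
  obtain ⟨hs₀, hs₁⟩ := hs
  have hπ := pi_pos
  interval_cases k <;> norm_num only [Nat.cast_ofNat, Nat.cast_zero, Nat.cast_one]
  · rw [circF_cos_sin_of_mem_Ioo_zero_pi_div_two ⟨by linarith, by linarith⟩,
      circF₁_cos ⟨by linarith, by linarith⟩, circF₂_sin_of_mem_Ioo_zero_pi ⟨by linarith, by linarith⟩,
      abs_of_neg (by linarith), abs_of_neg (by linarith)]
    field_simp
    ring
  · rw [circF_cos_sin_of_mem_Ioo_pi_div_two_pi ⟨by linarith, by linarith⟩,
      circF₁_cos ⟨by linarith, by linarith⟩, circF₂_sin_of_mem_Ioo_zero_pi ⟨by linarith, by linarith⟩,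
      abs_of_neg (by linarith), abs_of_pos (by linarith)]
    field_simp
    ring
  · rw [circF_cos_sin_of_mem_Ioo_pi_three_pi_div_two ⟨by linarith, by linarith⟩,
      circF₁_cos ⟨by linarith, by linarith⟩,
      circF₂_sin_of_mem_Ioo_pi_two_pi ⟨by linarith, by linarith⟩,
      abs_of_pos (by linarith), abs_of_neg (by linarith)]
    field_simp
    ring
  · rw [circF_cos_sin_of_mem_Ioo_three_pi_div_two_two_pi ⟨by linarith, by linarith⟩,
      circF₁_cos ⟨by linarith, by linarith⟩,
      circF₂_sin_of_mem_Ioo_pi_two_pi ⟨by linarith, by linarith⟩,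
      abs_of_pos (by linarith), abs_of_pos (by linarith)]
    field_simp
    ring

/-- Hoeffding's `D` correlation measure of the uniform distribution on
the unit circle equals `1/16`. -/
theorem hoeffdingD_circle :
    30 * ∫ p : ℝ × ℝ, (circF p.1 p.2 - circF₁ p.1 * circF₂ p.2) ^ 2 ∂circleUniform
      = 1 / 16 := by
  have hmeas : Measurable fun p : ℝ × ℝ => (circF p.1 p.2 - circF₁ p.1 * circF₂ p.2) ^ 2 :=
    ((measurable_measure_Iic_prod_Iic circleUniform).ennreal_toReal.sub
      ((monotone_circF₁.measurable.comp measurable_fst).mul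
        (monotone_circF₂.measurable.comp measurable_snd))).pow_const 2
  rw [integral_circleUniform hmeas, show 2 * π = (4 : ℕ) * (π / 2) by push_cast; ring,
    intervalIntegral_eq_mul_of_eqOn_translates (by positivity) 4 (by fun_prop)
      fun k hk s hs => circF_sub_mul_sq_of_mem_quadrant hk hs,
    intervalIntegral.integral_div, integral_sq_mul_sub_sq]
  field_simp
  ring
end

section
/- Let (X,Y) be uniformly distributed on the unit circle in ℝ². Then 90·∫∫ (F(x,y) − F₁(x)F₂(y))² dF₁(x) dF₂(y) = 1/16; i.e., Blum–Kiefer–Rosenblatt's R correlation measure of (X,Y) equals 1/16. -/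
/-
Both marginals are the arcsine law, `F₁(x) = F₂(x) = 1/2 + arcsin x / π`. Writing `α = arcsin x`,
`β = arcsin y` and measuring the arc `{θ : cos θ ≤ x, sin θ ≤ y}` of `[0, 2π]` one finds
`π² |F(x, y) - F₁(x) F₂(y)| = min (|α| |β|) ((π/2 - |α|) (π/2 - |β|))`.
Under the product of the marginals `|α|` and `|β|` are independent and uniform on `[0, π/2]`, so
`R = 90 (2/π)² π⁻⁴ ∫∫_{[0,π/2]²} min (s t) ((π/2 - s) (π/2 - t))² ds dt`, and splitting the inner
integral at `t = π/2 - s` shows that the double integral is `(π/2)⁶ / 90`.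
-/

open MeasureTheory

open Real Set intervalIntegral

namespace CircleBKR

noncomputable def uniformAngle : Measure ℝ :=
  (ENNReal.ofReal (2 * π))⁻¹ • volume.restrict (Ico 0 (2 * π))

instance : IsProbabilityMeasure uniformAngle := by
  constructor
  rw [uniformAngle, Measure.smul_apply, Measure.restrict_apply_univ, Real.volume_Ico, sub_zero,
    smul_eq_mul, ENNReal.inv_mul_cancel (by simp [pi_pos]) ENNReal.ofReal_ne_top]

theorem circleUniform_map_fst : circleUniform.map Prod.fst = uniformAngle.map cos :=
  Measure.map_map measurable_fst (measurable_cos.prodMk measurable_sin)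

theorem circleUniform_map_snd : circleUniform.map Prod.snd = uniformAngle.map sin :=
  Measure.map_map measurable_snd (measurable_cos.prodMk measurable_sin)

theorem circleUniform_real_apply {s : Set (ℝ × ℝ)} (hs : MeasurableSet s) :
    circleUniform.real s = uniformAngle.real ((fun θ => (cos θ, sin θ)) ⁻¹' s) :=
  map_measureReal_apply (measurable_cos.prodMk measurable_sin) hs

theorem uniformAngle_real_apply {s : Set ℝ} (hs : MeasurableSet s) :
    uniformAngle.real s = volume.real (s ∩ Icc 0 (2 * π)) / (2 * π) := by
  rw [measureReal_def, uniformAngle, Measure.smul_apply, Measure.restrict_apply hs, smul_eq_mul,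
    ENNReal.toReal_mul, ENNReal.toReal_inv, ENNReal.toReal_ofReal (by positivity),
    measure_congr (ae_eq_refl s |>.inter Ico_ae_eq_Icc), inv_mul_eq_div, measureReal_def]

theorem integral_uniformAngle (f : ℝ → ℝ) :
    ∫ θ, f θ ∂uniformAngle = (∫ θ in 0..2 * π, f θ) / (2 * π) := by
  rw [uniformAngle, MeasureTheory.integral_smul_measure, integral_of_le (by positivity),
    integral_Ioc_eq_integral_Ioo, ← integral_Ico_eq_integral_Ioo, ENNReal.toReal_inv,
    ENNReal.toReal_ofReal (by positivity), smul_eq_mul, inv_mul_eq_div]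

theorem integrable_uniformAngle_prod {f : ℝ × ℝ → ℝ} (hf : Continuous f) :
    Integrable f (uniformAngle.prod uniformAngle) := by
  rw [uniformAngle, Measure.prod_smul_left, Measure.prod_smul_right, Measure.prod_restrict,
    ← Measure.volume_eq_prod]
  refine Integrable.smul_measure (Integrable.smul_measure ?_ (by simp [pi_pos]))
    (by simp [pi_pos])
  exact (hf.continuousOn.integrableOn_compact (isCompact_Icc.prod isCompact_Icc)).mono_set
    (prod_mono Ico_subset_Icc_self Ico_subset_Icc_self)

theorem integral_uniformAngle_prod {f : ℝ × ℝ → ℝ} (hf : Continuous f) :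
    ∫ p, f p ∂(uniformAngle.prod uniformAngle) =
      (∫ θ in 0..2 * π, ∫ φ in 0..2 * π, f (θ, φ)) / (2 * π) ^ 2 := by
  rw [integral_prod f (integrable_uniformAngle_prod hf)]
  simp_rw [integral_uniformAngle, intervalIntegral.integral_div]
  ring

theorem arccos_le_iff_cos_le {x θ : ℝ} (hx : x ∈ Icc (-1 : ℝ) 1) (hθ : θ ∈ Icc 0 π) :
    arccos x ≤ θ ↔ cos θ ≤ x := by
  rw [arccos_eq_pi_div_two_sub_arcsin, sub_le_comm,
    le_arcsin_iff_sin_le ⟨by linarith [hθ.2], by linarith [hθ.1]⟩ hx, sin_pi_div_two_sub]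

theorem cos_le_iff_mem_arc {x θ : ℝ} (hx : x ∈ Icc (-1 : ℝ) 1) (hθ : θ ∈ Icc 0 (2 * π)) :
    cos θ ≤ x ↔ arccos x ≤ θ ∧ θ ≤ 2 * π - arccos x := by
  have := arccos_le_pi x
  rcases le_total θ π with h | h
  · rw [← arccos_le_iff_cos_le hx ⟨hθ.1, h⟩]
    exact ⟨fun h' => ⟨h', by linarith⟩, And.left⟩
  · rw [← cos_two_pi_sub, ← arccos_le_iff_cos_le hx ⟨by linarith [hθ.2], by linarith⟩]
    exact ⟨fun h' => ⟨by linarith [arccos_nonneg x], by linarith⟩, fun h' => by linarith [h'.2]⟩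

theorem sin_le_iff_mem_arcs {y θ : ℝ} (hy : y ∈ Icc (-1 : ℝ) 1) (hθ : θ ∈ Icc 0 (2 * π)) :
    sin θ ≤ y ↔ θ ≤ arcsin y ∨ π - arcsin y ≤ θ ∧ θ ≤ 2 * π + arcsin y := by
  have := arcsin_le_pi_div_two y
  have := neg_pi_div_two_le_arcsin y
  rcases le_total θ (π / 2) with h₁ | h₁
  · rw [← le_arcsin_iff_sin_le ⟨by linarith [hθ.1], h₁⟩ hy]
    exact ⟨Or.inl, fun h => h.elim id fun h => by linarith [h.1]⟩
  rcases le_total θ (3 * π / 2) with h₂ | h₂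
  · rw [← sin_pi_sub, ← le_arcsin_iff_sin_le ⟨by linarith, by linarith⟩ hy]
    exact ⟨fun h => Or.inr ⟨by linarith, by linarith⟩,
      fun h => h.elim (fun h => by linarith) fun h => by linarith [h.1]⟩
  · rw [← sin_sub_two_pi, ← le_arcsin_iff_sin_le ⟨by linarith, by linarith [hθ.2]⟩ hy]
    exact ⟨fun h => Or.inr ⟨by linarith, by linarith⟩,
      fun h => h.elim (fun h => by linarith) fun h => by linarith [h.2]⟩

theorem volume_real_Icc_union_Icc {a b c d : ℝ} (h : b ≤ c) :
    volume.real (Icc a b ∪ Icc c d) = max (b - a) 0 + max (d - c) 0 := by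
  have hd : AEDisjoint volume (Icc a b) (Icc c d) := by
    refine measure_mono_null (t := Icc c b) (fun θ hθ => ⟨hθ.2.1, hθ.1.2⟩) ?_
    rw [Real.volume_Icc, ENNReal.ofReal_eq_zero, sub_nonpos]
    exact h
  rw [measureReal_union₀ measurableSet_Icc.nullMeasurableSet hd measure_Icc_lt_top.ne
    measure_Icc_lt_top.ne, Real.volume_real_Icc, Real.volume_real_Icc]

theorem circF_eq {x y : ℝ} (hx : x ∈ Icc (-1 : ℝ) 1) (hy : y ∈ Icc (-1 : ℝ) 1) :
    circF x y = (max (arcsin y - arccos x) 0 + max (min (2 * π - arccos x) (2 * π + arcsin y)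
      - max (arccos x) (π - arcsin y)) 0) / (2 * π) := by
  have := arccos_nonneg x
  have := arccos_le_pi x
  have := arcsin_le_pi_div_two y
  have hS : (fun θ => (cos θ, sin θ)) ⁻¹' (Iic x ×ˢ Iic y) ∩ Icc 0 (2 * π) =
      Icc (arccos x) (arcsin y) ∪
        Icc (max (arccos x) (π - arcsin y)) (min (2 * π - arccos x) (2 * π + arcsin y)) := by
    ext θ
    simp only [mem_inter_iff, mem_preimage, mem_prod, mem_Iic, mem_union, mem_Icc, max_le_iff,
      le_min_iff]
    constructor
    · rintro ⟨⟨hc, hs⟩, hθ⟩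
      rw [cos_le_iff_mem_arc hx hθ] at hc
      rw [sin_le_iff_mem_arcs hy hθ] at hs
      rcases hs with hs | hs
      · exact Or.inl ⟨hc.1, hs⟩
      · exact Or.inr ⟨⟨hc.1, hs.1⟩, hc.2, hs.2⟩
    · rintro (hθ | hθ)
      · have hθ' : θ ∈ Icc 0 (2 * π) := ⟨by linarith [hθ.1], by linarith [hθ.2]⟩
        rw [cos_le_iff_mem_arc hx hθ', sin_le_iff_mem_arcs hy hθ']
        exact ⟨⟨⟨hθ.1, by linarith [hθ.2]⟩, Or.inl hθ.2⟩, hθ'⟩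
      · have hθ' : θ ∈ Icc 0 (2 * π) := ⟨by linarith [hθ.1.1], by linarith [hθ.2.1]⟩
        rw [cos_le_iff_mem_arc hx hθ', sin_le_iff_mem_arcs hy hθ']
        exact ⟨⟨⟨hθ.1.1, hθ.2.1⟩, Or.inr ⟨hθ.1.2, hθ.2.2⟩⟩, hθ'⟩
  have hmeas : MeasurableSet ((fun θ => (cos θ, sin θ)) ⁻¹' (Iic x ×ˢ Iic y)) :=
    (measurable_cos.prodMk measurable_sin) (measurableSet_Iic.prod measurableSet_Iic)
  rw [circF, ← measureReal_def, circleUniform_real_apply (measurableSet_Iic.prod measurableSet_Iic),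
    uniformAngle_real_apply hmeas, hS, volume_real_Icc_union_Icc (le_max_of_le_right (by linarith))]

theorem circF₁_eq_circF (x : ℝ) : circF₁ x = circF x 1 := by
  rw [circF₁, circF, ← measureReal_def, ← measureReal_def,
    map_measureReal_apply measurable_fst measurableSet_Iic,
    circleUniform_real_apply (measurable_fst measurableSet_Iic),
    circleUniform_real_apply (measurableSet_Iic.prod measurableSet_Iic)]
  congr 1
  ext θ
  simp [sin_le_one]

theorem circF₂_eq_circF (y : ℝ) : circF₂ y = circF 1 y := by
  rw [circF₂, circF, ← measureReal_def, ← measureReal_def,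
    map_measureReal_apply measurable_snd measurableSet_Iic,
    circleUniform_real_apply (measurable_snd measurableSet_Iic),
    circleUniform_real_apply (measurableSet_Iic.prod measurableSet_Iic)]
  congr 1
  ext θ
  simp [cos_le_one]

theorem circF₁_eq {x : ℝ} (hx : x ∈ Icc (-1 : ℝ) 1) : circF₁ x = 1 / 2 + arcsin x / π := by
  have := arccos_nonneg x
  have := arccos_le_pi x
  have := pi_pos
  rw [circF₁_eq_circF, circF_eq hx ⟨by norm_num, le_rfl⟩, arcsin_one,
    arcsin_eq_pi_div_two_sub_arccos]
  simp only [max_def, min_def]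
  split_ifs <;> field_simp <;> linarith

theorem circF₂_eq {y : ℝ} (hy : y ∈ Icc (-1 : ℝ) 1) : circF₂ y = 1 / 2 + arcsin y / π := by
  have := arcsin_le_pi_div_two y
  have := neg_pi_div_two_le_arcsin y
  have := pi_pos
  rw [circF₂_eq_circF, circF_eq ⟨by norm_num, le_rfl⟩ hy, arccos_one]
  simp only [max_def, min_def]
  split_ifs <;> field_simp <;> linarith

def minCornerArea (L s t : ℝ) : ℝ := min (s * t) ((L - s) * (L - t))

theorem minCornerArea_eq {L : ℝ} (hL : 0 ≤ L) (s t : ℝ) :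
    minCornerArea L s t = s * t - L * max (s + t - L) 0 := by
  rw [minCornerArea, mul_max_of_nonneg _ _ hL, mul_zero, ← min_sub_sub_left, sub_zero, min_comm]
  ring_nf

theorem circF_sub_mul_sq {x y : ℝ} (hx : x ∈ Icc (-1 : ℝ) 1) (hy : y ∈ Icc (-1 : ℝ) 1) :
    (circF x y - circF₁ x * circF₂ y) ^ 2 =
      minCornerArea (π / 2) |arcsin x| |arcsin y| ^ 2 / π ^ 4 := by
  rw [circF_eq hx hy, circF₁_eq hx, circF₂_eq hy, arccos_eq_pi_div_two_sub_arcsin,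
    minCornerArea_eq (by positivity)]
  have := pi_pos
  have := arcsin_le_pi_div_two x
  have := neg_pi_div_two_le_arcsin x
  have := arcsin_le_pi_div_two y
  have := neg_pi_div_two_le_arcsin y
  -- on each of the eight regions cut out by the signs of `arcsin x`, `arcsin y` and by
  -- `|arcsin x| + |arcsin y| = π / 2`, each `max`, `min` and `|·|` is settled by a linear
  -- inequality
  rcases le_total 0 (arcsin x) with hα | hα <;> rcases le_total 0 (arcsin y) with hβ | hβ <;>
    rcases le_total (|arcsin x| + |arcsin y|) (π / 2) with h | h <;>
    simp (disch := grind) only [abs_of_nonneg, abs_of_nonpos] at h ⊢ <;>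
    simp (disch := grind) only [max_eq_left, max_eq_right, min_eq_left, min_eq_right] <;>
    field_simp <;> ring

theorem integral_sq_minCornerArea {L s : ℝ} (hs : s ∈ Icc 0 L) :
    ∫ t in 0..L, minCornerArea L s t ^ 2 = L * s ^ 2 * (L - s) ^ 2 / 3 := by
  obtain ⟨hs₀, hsL⟩ := hs
  have hint : ∀ a b, IntervalIntegrable (fun t => minCornerArea L s t ^ 2) volume a b :=
    fun a b => (by unfold minCornerArea; fun_prop : Continuous _).intervalIntegrable a b
  have h₁ : ∫ t in 0..L - s, minCornerArea L s t ^ 2 = ∫ t in 0..L - s, (s * t) ^ 2 := by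
    refine integral_congr fun t ht => ?_
    rw [uIcc_of_le (by linarith)] at ht
    rw [minCornerArea, min_eq_left (by nlinarith [ht.1, ht.2])]
  have h₂ : ∫ t in L - s..L, minCornerArea L s t ^ 2 =
      ∫ t in L - s..L, ((L - s) * (L - t)) ^ 2 := by
    refine integral_congr fun t ht => ?_
    rw [uIcc_of_le (by linarith)] at ht
    rw [minCornerArea, min_eq_right (by nlinarith [ht.1, ht.2])]
  rw [← integral_add_adjacent_intervals (hint 0 (L - s)) (hint (L - s) L), h₁, h₂]
  simp [mul_pow, integral_comp_sub_left (fun t => t ^ 2), integral_pow]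
  ring

theorem integral_integral_sq_minCornerArea {L : ℝ} (hL : 0 ≤ L) :
    ∫ s in 0..L, ∫ t in 0..L, minCornerArea L s t ^ 2 = L ^ 6 / 90 := by
  have h : ∫ s in 0..L, ∫ t in 0..L, minCornerArea L s t ^ 2 =
      ∫ s in 0..L, (L ^ 3 / 3 * s ^ 2 - 2 * L ^ 2 / 3 * s ^ 3 + L / 3 * s ^ 4) := by
    refine integral_congr fun s hs => ?_
    rw [uIcc_of_le hL] at hs
    rw [integral_sq_minCornerArea hs]
    ring
  rw [h, intervalIntegral.integral_add, intervalIntegral.integral_sub] <;> simp [integral_pow]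
  ring

theorem abs_arcsin_sin_periodic : Function.Periodic (fun φ => |arcsin (sin φ)|) π := fun φ => by
  simp [sin_add_pi, arcsin_neg]

theorem integral_comp_abs_arcsin_sin {k : ℝ → ℝ} (hk : Continuous k) (c : ℝ) :
    ∫ φ in c..c + 2 * π, k |arcsin (sin φ)| = 4 * ∫ t in 0..π / 2, k t := by
  have := pi_pos
  have hg : Continuous fun φ => k |arcsin (sin φ)| := by fun_prop
  have hper : Function.Periodic (fun φ => k |arcsin (sin φ)|) π := abs_arcsin_sin_periodic.comp k
  have hhalf : ∫ φ in π / 2..π, k |arcsin (sin φ)| = ∫ φ in 0..π / 2, k |arcsin (sin φ)| :=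
    calc ∫ φ in π / 2..π, k |arcsin (sin φ)| = ∫ φ in π / 2..π, k |arcsin (sin (π - φ))| := by
          simp only [sin_pi_sub]
      _ = ∫ φ in 0..π / 2, k |arcsin (sin φ)| := by
          rw [integral_comp_sub_left (fun φ => k |arcsin (sin φ)|) π, sub_self, sub_half]
  have hfold : ∫ φ in 0..π / 2, k |arcsin (sin φ)| = ∫ t in 0..π / 2, k t := by
    refine integral_congr fun φ hφ => ?_
    rw [uIcc_of_le (by linarith)] at hφ
    rw [arcsin_sin (by linarith [hφ.1]) hφ.2, abs_of_nonneg hφ.1]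
  have hper₂ : Function.Periodic (fun φ => k |arcsin (sin φ)|) (2 * π) := fun φ => by
    simp only [sin_add_two_pi]
  rw [hper₂.intervalIntegral_add_eq c 0, zero_add, two_mul,
    hper.intervalIntegral_add_eq_add 0 π (fun a b => hg.intervalIntegrable a b), zero_add,
    ← integral_add_adjacent_intervals (hg.intervalIntegrable 0 (π / 2))
      (hg.intervalIntegrable (π / 2) π), hhalf, hfold]
  ring

theorem integral_comp_abs_arcsin_cos {k : ℝ → ℝ} (hk : Continuous k) :
    ∫ θ in 0..2 * π, k |arcsin (cos θ)| = 4 * ∫ t in 0..π / 2, k t := by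
  simp_rw [← sin_add_pi_div_two]
  rw [integral_comp_add_right (fun φ => k |arcsin (sin φ)|), zero_add, add_comm (2 * π)]
  exact integral_comp_abs_arcsin_sin hk _

theorem integral_integral_comp_abs_arcsin {k : ℝ → ℝ → ℝ} (hk : Continuous k.uncurry) :
    ∫ θ in 0..2 * π, ∫ φ in 0..2 * π, k |arcsin (cos θ)| |arcsin (sin φ)| =
      16 * ∫ s in 0..π / 2, ∫ t in 0..π / 2, k s t := by
  have hks : ∀ s, Continuous (k s) := fun s => hk.comp (Continuous.prodMk_right s)
  have hinner : ∀ s, ∫ φ in 0..2 * π, k s |arcsin (sin φ)| = 4 * ∫ t in 0..π / 2, k s t :=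
    fun s => by simpa using integral_comp_abs_arcsin_sin (hks s) 0
  simp_rw [hinner]
  rw [integral_comp_abs_arcsin_cos (k := fun s => 4 * ∫ t in 0..π / 2, k s t)
    (continuous_const.mul (continuous_parametric_intervalIntegral_of_continuous' hk _ _)),
    intervalIntegral.integral_const_mul]
  ring

end CircleBKR

open CircleBKR

/-- Blum–Kiefer–Rosenblatt's `R` correlation measure of the uniform
distribution on the unit circle equals `1/16`; the integral is with respect to the
product of the two marginal distributions. -/
theorem BKR_circle :
    90 * ∫ p : ℝ × ℝ, (circF p.1 p.2 - circF₁ p.1 * circF₂ p.2) ^ 2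
        ∂((circleUniform.map Prod.fst).prod (circleUniform.map Prod.snd))
      = 1 / 16 := by
  have hcos : ∀ᵐ x ∂uniformAngle.map cos, x ∈ Icc (-1 : ℝ) 1 :=
    (ae_map_iff measurable_cos.aemeasurable measurableSet_Icc).2
      (ae_of_all _ fun θ => ⟨neg_one_le_cos θ, cos_le_one θ⟩)
  have hsin : ∀ᵐ y ∂uniformAngle.map sin, y ∈ Icc (-1 : ℝ) 1 :=
    (ae_map_iff measurable_sin.aemeasurable measurableSet_Icc).2
      (ae_of_all _ fun θ => ⟨neg_one_le_sin θ, sin_le_one θ⟩)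
  have hgap := (Measure.quasiMeasurePreserving_fst.ae hcos).and
    (Measure.quasiMeasurePreserving_snd.ae hsin) |>.mono fun p hp => circF_sub_mul_sq hp.1 hp.2
  have hk : Continuous fun p : ℝ × ℝ =>
      minCornerArea (π / 2) |arcsin p.1| |arcsin p.2| ^ 2 / π ^ 4 := by
    unfold minCornerArea; fun_prop
  rw [circleUniform_map_fst, circleUniform_map_snd, integral_congr_ae hgap,
    Measure.map_prod_map _ _ measurable_cos measurable_sin,
    integral_map (measurable_cos.prodMap measurable_sin).aemeasurable hk.aestronglyMeasurable]
  simp only [Prod.map_fst, Prod.map_snd]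
  rw [integral_uniformAngle_prod (by unfold minCornerArea; fun_prop),
    integral_integral_comp_abs_arcsin (k := fun s t => minCornerArea (π / 2) s t ^ 2 / π ^ 4)
      (by unfold minCornerArea; fun_prop)]
  simp only [intervalIntegral.integral_div]
  rw [integral_integral_sq_minCornerArea (by positivity)]
  field_simp
  ring
end

section
/- For any bivariate CDF F on ℝ² with absolutely continuous joint distribution and marginal CDFs F₁, F₂, the following integral identity holds: ∫ F² dF − 2∫ F·F₁·F₂ dF + 2∫ F² dF₁dF₂ − 1/9 = ∫(F − F₁F₂)² dF + 2∫(F − F₁F₂)² dF₁dF₂. -/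
/-!
Write `ν₁, ν₂` for the marginals of `ν`, `F₁, F₂` for their distribution functions and
`μ = ν₁ ⊗ ν₂`. Expanding both squares reduces the identity to the two moment relations
`∫ (F₁F₂)² dμ = 1/9` and `4 ∫ F F₁F₂ dμ = ∫ (F₁F₂)² dν + 1/3`.

Absolute continuity makes the marginals atomless. For an atomless law with distribution
function `G` and two independent copies `X, Y`, the event `max X Y ≥ a` splits into two mirror
halves `{a ≤ X, Y ≤ X}` and `{a ≤ Y, X ≤ Y}` meeting only on the null diagonal, so
`2 ∫_{[a,∞)} G dG = 1 - G(a)²`; integrating in `a` (Fubini once more) gives `∫ G² dG = 1/3`,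
whence the first relation. For the second, Fubini turns `∫ F F₁F₂ dμ` into
`∫ T₁(x) T₂(y) dν(x, y)` with `Tᵢ(a) = ∫_{[a,∞)} Fᵢ dνᵢ = (1 - Fᵢ(a)²)/2`, and
`(1 - F₁²)(1 - F₂²)` integrates under `ν` to `1/3 + ∫ (F₁F₂)² dν`.
-/

open MeasureTheory Set
open scoped ENNReal

section Fubini

variable {α : Type*} [MeasurableSpace α] [TopologicalSpace α] [OpensMeasurableSpace α]
  [PartialOrder α] [OrderClosedTopology α] [SecondCountableTopology α]

lemma measurable_measure_Iic (ν : Measure α) [SFinite ν] : Measurable fun p => ν (Iic p) :=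
  measurable_measure_prodMk_left (measurableSet_le measurable_snd measurable_fst)

lemma lintegral_measure_Iic_mul (μ ν : Measure α) [SFinite μ] [SFinite ν] {f : α → ℝ≥0∞}
    (hf : Measurable f) :
    ∫⁻ p, ν (Iic p) * f p ∂μ = ∫⁻ q, ∫⁻ p in Ici q, f p ∂μ ∂ν := by
  set S : Set (α × α) := {r | r.2 ≤ r.1}
  have hS : MeasurableSet S := measurableSet_le measurable_snd measurable_fst
  calc ∫⁻ p, ν (Iic p) * f p ∂μ
      = ∫⁻ p, ∫⁻ q, S.indicator (fun r => f r.1) (p, q) ∂ν ∂μ := by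
        refine lintegral_congr fun p => ?_
        rw [mul_comm, ← lintegral_indicator_const measurableSet_Iic]
        rfl
    _ = ∫⁻ q, ∫⁻ p, S.indicator (fun r => f r.1) (p, q) ∂μ ∂ν :=
        lintegral_lintegral_swap ((hf.comp measurable_fst).indicator hS).aemeasurable
    _ = ∫⁻ q, ∫⁻ p in Ici q, f p ∂μ ∂ν := by
        refine lintegral_congr fun q => ?_
        rw [← lintegral_indicator measurableSet_Ici]
        rfl

end Fubini

lemma nullSingletonClass_fst_of_absolutelyContinuous {α β : Type*} [MeasurableSpace α]
    [MeasurableSingletonClass α] [MeasurableSpace β] {μ : Measure α} {ν : Measure β}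
    [NullSingletonClass μ] [SFinite ν] {ρ : Measure (α × β)} (h : ρ ≪ μ.prod ν) :
    NullSingletonClass ρ.fst where
  measure_singleton x := by
    rw [Measure.fst_apply (measurableSet_singleton x)]
    exact h (by rw [← prod_univ, Measure.prod_prod, measure_singleton, zero_mul])

lemma nullSingletonClass_snd_of_absolutelyContinuous {α β : Type*} [MeasurableSpace α]
    [MeasurableSpace β] [MeasurableSingletonClass β] {μ : Measure α} {ν : Measure β}
    [SFinite ν] [NullSingletonClass ν] {ρ : Measure (α × β)} (h : ρ ≪ μ.prod ν) :
    NullSingletonClass ρ.snd where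
  measure_singleton y := by
    rw [Measure.snd_apply (measurableSet_singleton y)]
    exact h (by rw [← univ_prod, Measure.prod_prod, measure_singleton, mul_zero])

lemma integral_toReal_of_le_one {β : Type*} [MeasurableSpace β] {μ : Measure β}
    {f : β → ℝ≥0∞} (hf : Measurable f) (h : ∀ x, f x ≤ 1) :
    ∫ x, (f x).toReal ∂μ = (∫⁻ x, f x ∂μ).toReal :=
  integral_toReal hf.aemeasurable (ae_of_all _ fun x => (h x).trans_lt ENNReal.one_lt_top)

lemma memLp_toReal_of_le_one {β : Type*} [MeasurableSpace β] {f : β → ℝ≥0∞}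
    (hf : Measurable f) (h : ∀ x, f x ≤ 1) (μ : Measure β) [IsFiniteMeasure μ] (p : ℝ≥0∞) :
    MemLp (fun x => (f x).toReal) p μ :=
  MemLp.of_bound hf.ennreal_toReal.aestronglyMeasurable 1 <| ae_of_all _ fun x => by
    rw [Real.norm_of_nonneg ENNReal.toReal_nonneg]
    exact ENNReal.toReal_le_of_le_ofReal zero_le_one (by simpa using h x)

lemma integral_sub_sq {β : Type*} [MeasurableSpace β] {μ : Measure β} {f g : β → ℝ}
    (hf : MemLp f 2 μ) (hg : MemLp g 2 μ) :
    ∫ x, (f x - g x) ^ 2 ∂μ = ∫ x, f x ^ 2 ∂μ - 2 * ∫ x, f x * g x ∂μ + ∫ x, g x ^ 2 ∂μ := by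
  have hfg : Integrable (fun x => 2 * (f x * g x)) μ := (hf.integrable_mul hg).const_mul 2
  have hexpand (x : β) : (f x - g x) ^ 2 = f x ^ 2 - 2 * (f x * g x) + g x ^ 2 := by ring
  simp_rw [hexpand]
  rw [integral_add (by exact hf.integrable_sq.sub hfg) hg.integrable_sq,
    integral_sub hf.integrable_sq hfg, integral_const_mul]

lemma measure_prod_setOf_le_fst (μ ν : Measure ℝ) [SFinite ν] (a : ℝ) :
    (μ.prod ν) {p | a ≤ p.1 ∧ p.2 ≤ p.1} = ∫⁻ x in Ici a, ν (Iic x) ∂μ := by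
  have hE : MeasurableSet {p : ℝ × ℝ | a ≤ p.1 ∧ p.2 ≤ p.1} :=
    (measurableSet_Ici.preimage measurable_fst).inter
      (measurableSet_le measurable_snd measurable_fst)
  rw [Measure.prod_apply hE, ← lintegral_indicator measurableSet_Ici]
  refine lintegral_congr fun x => ?_
  by_cases h : a ≤ x
  · simp [h, Iic]
  · simp [h]

section Univariate

variable (m : Measure ℝ) [IsProbabilityMeasure m] [NullSingletonClass m]

lemma two_mul_setLIntegral_Ici_add_sq (a : ℝ) :
    2 * ∫⁻ x in Ici a, m (Iic x) ∂m + m (Iic a) ^ 2 = 1 := by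
  set E : Set (ℝ × ℝ) := {p | a ≤ p.1 ∧ p.2 ≤ p.1}
  have hE : MeasurableSet E :=
    (measurableSet_Ici.preimage measurable_fst).inter
      (measurableSet_le measurable_snd measurable_fst)
  have hswap : (m.prod m) (Prod.swap ⁻¹' E) = (m.prod m) E := by
    rw [← Measure.map_apply measurable_swap hE, Measure.prod_swap]
  have hdiag : (m.prod m) {p | p.1 = p.2} = 0 := by
    rw [Measure.prod_apply (measurableSet_eq_fun measurable_fst measurable_snd)]
    simp
  have hinter : (m.prod m) (E ∩ Prod.swap ⁻¹' E) = 0 :=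
    measure_mono_null (fun p ⟨⟨_, h₁⟩, _, h₂⟩ => le_antisymm h₂ h₁) hdiag
  have hunion : E ∪ Prod.swap ⁻¹' E = (Iio a ×ˢ Iio a)ᶜ := by
    ext p
    simp only [E, mem_union, mem_preimage, mem_ofPred_eq, Prod.fst_swap, Prod.snd_swap,
      mem_compl_iff, mem_prod, mem_Iio, not_and, not_lt]
    grind
  have hcorner : (m.prod m) (Iio a ×ˢ Iio a) = m (Iic a) ^ 2 := by
    rw [Measure.prod_prod, measure_congr Iio_ae_eq_Iic, sq]
  calc 2 * ∫⁻ x in Ici a, m (Iic x) ∂m + m (Iic a) ^ 2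
      = (m.prod m) E + (m.prod m) (Prod.swap ⁻¹' E) + (m.prod m) (Iio a ×ˢ Iio a) := by
        rw [← measure_prod_setOf_le_fst, hswap, hcorner, two_mul]
    _ = 1 := by
        rw [← measure_union_add_inter E (hE.preimage measurable_swap), hinter, add_zero, hunion,
          add_comm, prob_add_prob_compl (measurableSet_Iio.prod measurableSet_Iio)]

lemma lintegral_measure_Iic_sq : ∫⁻ x, m (Iic x) ^ 2 ∂m = 1 / 3 := by
  have hF := measurable_measure_Iic m
  have hfubini : ∫⁻ x, m (Iic x) ^ 2 ∂m = ∫⁻ a, ∫⁻ x in Ici a, m (Iic x) ∂m ∂m := by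
    simp_rw [sq]
    exact lintegral_measure_Iic_mul m m hF
  rw [ENNReal.eq_div_iff (by norm_num) (by norm_num)]
  calc 3 * ∫⁻ x, m (Iic x) ^ 2 ∂m
      = ∫⁻ a, (2 * ∫⁻ x in Ici a, m (Iic x) ∂m + m (Iic a) ^ 2) ∂m := by
        rw [lintegral_add_right _ (hF.pow_const 2), lintegral_const_mul' _ _ (by norm_num),
          ← hfubini]
        ring
    _ = 1 := by simp [two_mul_setLIntegral_Ici_add_sq]

lemma integral_toReal_measure_Iic_sq :
    ∫ x, (m (Iic x)).toReal ^ 2 ∂m = 1 / 3 := by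
  simp_rw [← ENNReal.toReal_pow]
  rw [integral_toReal ((measurable_measure_Iic m).pow_const 2).aemeasurable
    (ae_of_all _ fun x => by simp [measure_lt_top]), lintegral_measure_Iic_sq]
  simp

end Univariate

lemma integral_prod_toReal_measure_Iic_mul_sq (μ₁ μ₂ : Measure ℝ) [IsProbabilityMeasure μ₁]
    [NullSingletonClass μ₁] [IsProbabilityMeasure μ₂] [NullSingletonClass μ₂] :
    ∫ p, ((μ₁ (Iic p.1)).toReal * (μ₂ (Iic p.2)).toReal) ^ 2 ∂(μ₁.prod μ₂) = 1 / 9 := by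
  simp_rw [mul_pow]
  rw [integral_prod_mul (fun x => (μ₁ (Iic x)).toReal ^ 2) (fun y => (μ₂ (Iic y)).toReal ^ 2),
    integral_toReal_measure_Iic_sq, integral_toReal_measure_Iic_sq]
  norm_num

lemma four_mul_mul_add_add_eq {R : Type*} [CommSemiring R] {x y u v : R}
    (hx : 2 * x + u = 1) (hy : 2 * y + v = 1) : 4 * (x * y) + u + v = 1 + u * v :=
  calc 4 * (x * y) + u + v = 4 * (x * y) + u * (2 * y + v) + (2 * x + u) * v := by
        rw [hx, hy, mul_one, one_mul]
    _ = (2 * x + u) * (2 * y + v) + u * v := by ring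
    _ = 1 + u * v := by rw [hx, hy, one_mul]

lemma measurable_measure_Iic_fst_mul_snd (μ₁ μ₂ : Measure ℝ) [SFinite μ₁] [SFinite μ₂] :
    Measurable fun q : ℝ × ℝ => μ₁ (Iic q.1) * μ₂ (Iic q.2) :=
  ((measurable_measure_Iic μ₁).comp measurable_fst).mul
    ((measurable_measure_Iic μ₂).comp measurable_snd)

section Bivariate

variable (ν : Measure (ℝ × ℝ)) [IsProbabilityMeasure ν] [NullSingletonClass ν.fst]
  [NullSingletonClass ν.snd]

lemma lintegral_measure_Iic_mul_marginals :
    4 * ∫⁻ p, ν (Iic p) * (ν.fst (Iic p.1) * ν.snd (Iic p.2)) ∂(ν.fst.prod ν.snd)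
      = ∫⁻ q, (ν.fst (Iic q.1) * ν.snd (Iic q.2)) ^ 2 ∂ν + 1 / 3 := by
  have hF₁ := measurable_measure_Iic ν.fst
  have hF₂ := measurable_measure_Iic ν.snd
  have hG₁ : Measurable fun q : ℝ × ℝ => ν.fst (Iic q.1) := hF₁.comp measurable_fst
  have hG₂ : Measurable fun q : ℝ × ℝ => ν.snd (Iic q.2) := hF₂.comp measurable_snd
  set T₁ : ℝ → ℝ≥0∞ := fun a => ∫⁻ x in Ici a, ν.fst (Iic x) ∂ν.fst
  set T₂ : ℝ → ℝ≥0∞ := fun b => ∫⁻ y in Ici b, ν.snd (Iic y) ∂ν.snd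
  have hfubini : ∫⁻ p, ν (Iic p) * (ν.fst (Iic p.1) * ν.snd (Iic p.2)) ∂(ν.fst.prod ν.snd)
      = ∫⁻ q, T₁ q.1 * T₂ q.2 ∂ν := by
    rw [lintegral_measure_Iic_mul _ _ (measurable_measure_Iic_fst_mul_snd ν.fst ν.snd)]
    refine lintegral_congr fun q => ?_
    rw [Ici_prod_eq, ← Measure.prod_restrict,
      lintegral_prod_mul hF₁.aemeasurable hF₂.aemeasurable]
  have hpointwise (q : ℝ × ℝ) :
      4 * (T₁ q.1 * T₂ q.2) + ν.fst (Iic q.1) ^ 2 + ν.snd (Iic q.2) ^ 2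
        = 1 + (ν.fst (Iic q.1) * ν.snd (Iic q.2)) ^ 2 := by
    rw [mul_pow]
    exact four_mul_mul_add_add_eq (two_mul_setLIntegral_Ici_add_sq _ _)
      (two_mul_setLIntegral_Ici_add_sq _ _)
  have hmarg₁ : ∫⁻ q, ν.fst (Iic q.1) ^ 2 ∂ν = 1 / 3 := by
    rw [← lintegral_measure_Iic_sq ν.fst]
    exact (lintegral_map (hF₁.pow_const 2) measurable_fst).symm
  have hmarg₂ : ∫⁻ q, ν.snd (Iic q.2) ^ 2 ∂ν = 1 / 3 := by
    rw [← lintegral_measure_Iic_sq ν.snd]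
    exact (lintegral_map (hF₂.pow_const 2) measurable_snd).symm
  have hintegrated := lintegral_congr (μ := ν) hpointwise
  rw [lintegral_add_right _ (hG₂.pow_const 2), lintegral_add_right _ (hG₁.pow_const 2),
    lintegral_const_mul' _ _ (by norm_num), hmarg₁, hmarg₂, lintegral_add_left measurable_const,
    lintegral_const, measure_univ, mul_one] at hintegrated
  have hthird : (1 / 3 : ℝ≥0∞) ≠ ∞ := by simp
  rw [hfubini, ← ENNReal.add_left_inj hthird, ← ENNReal.add_left_inj hthird, hintegrated,
    add_assoc, add_assoc, ← add_assoc (1 / 3), ENNReal.add_thirds, add_comm]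

lemma integral_toReal_measure_Iic_mul_marginals :
    4 * ∫ p, (ν (Iic p.1 ×ˢ Iic p.2)).toReal
        * ((ν.fst (Iic p.1)).toReal * (ν.snd (Iic p.2)).toReal) ∂(ν.fst.prod ν.snd)
      = ∫ q, ((ν.fst (Iic q.1)).toReal * (ν.snd (Iic q.2)).toReal) ^ 2 ∂ν + 1 / 3 := by
  have hG := measurable_measure_Iic_fst_mul_snd ν.fst ν.snd
  have hsq_le (q : ℝ × ℝ) : (ν.fst (Iic q.1) * ν.snd (Iic q.2)) ^ 2 ≤ 1 :=
    pow_le_one' (mul_le_one' prob_le_one prob_le_one) 2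
  have hsq_ne_top : ∫⁻ q, (ν.fst (Iic q.1) * ν.snd (Iic q.2)) ^ 2 ∂ν ≠ ∞ :=
    ((lintegral_mono hsq_le).trans_lt (lintegral_const_lt_top ENNReal.one_ne_top)).ne
  simp_rw [← ENNReal.toReal_mul, ← ENNReal.toReal_pow]
  rw [integral_toReal_of_le_one ?_ fun p => mul_le_one' prob_le_one
      (mul_le_one' prob_le_one prob_le_one), integral_toReal_of_le_one ?_ hsq_le]
  · have h := congrArg ENNReal.toReal (lintegral_measure_Iic_mul_marginals ν)
    rw [ENNReal.toReal_mul, ENNReal.toReal_add hsq_ne_top (by simp)] at h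
    simpa using h
  · exact hG.pow_const 2
  · exact (measurable_measure_Iic ν).mul hG

end Bivariate

/-- for an absolutely continuous bivariate distribution `ν` with joint CDF
`F` and marginal CDFs `F₁, F₂`,
`∫ F² dν − 2∫ F F₁ F₂ dν + 2∫ F² d(ν₁ × ν₂) − 1/9
  = ∫ (F − F₁F₂)² dν + 2∫ (F − F₁F₂)² d(ν₁ × ν₂)`. -/
theorem yanagimoto_representation_identity
    (ν : Measure (ℝ × ℝ)) [IsProbabilityMeasure ν] (hac : ν ≪ volume)
    (F : ℝ → ℝ → ℝ) (F₁ F₂ : ℝ → ℝ)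
    (hF : ∀ x y, F x y = (ν (Set.Iic x ×ˢ Set.Iic y)).toReal)
    (hF₁ : ∀ x, F₁ x = ((ν.map Prod.fst) (Set.Iic x)).toReal)
    (hF₂ : ∀ y, F₂ y = ((ν.map Prod.snd) (Set.Iic y)).toReal) :
    (∫ p : ℝ × ℝ, (F p.1 p.2) ^ 2 ∂ν)
      - 2 * ∫ p : ℝ × ℝ, F p.1 p.2 * F₁ p.1 * F₂ p.2 ∂ν
      + 2 * (∫ p : ℝ × ℝ, (F p.1 p.2) ^ 2 ∂((ν.map Prod.fst).prod (ν.map Prod.snd)))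
      - 1 / 9
    = (∫ p : ℝ × ℝ, (F p.1 p.2 - F₁ p.1 * F₂ p.2) ^ 2 ∂ν)
      + 2 * ∫ p : ℝ × ℝ, (F p.1 p.2 - F₁ p.1 * F₂ p.2) ^ 2
          ∂((ν.map Prod.fst).prod (ν.map Prod.snd)) := by
  obtain rfl : F = fun x y => (ν (Iic x ×ˢ Iic y)).toReal := funext₂ hF
  obtain rfl : F₁ = fun x => (ν.fst (Iic x)).toReal := funext hF₁
  obtain rfl : F₂ = fun y => (ν.snd (Iic y)).toReal := funext hF₂
  rw [show ν.map Prod.fst = ν.fst from rfl, show ν.map Prod.snd = ν.snd from rfl]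
  rw [Measure.volume_eq_prod] at hac
  have := nullSingletonClass_fst_of_absolutelyContinuous hac
  have := nullSingletonClass_snd_of_absolutelyContinuous hac
  have hf (ρ : Measure (ℝ × ℝ)) [IsFiniteMeasure ρ] :
      MemLp (fun p : ℝ × ℝ => (ν (Iic p.1 ×ˢ Iic p.2)).toReal) 2 ρ :=
    memLp_toReal_of_le_one (measurable_measure_Iic ν) (fun _ => prob_le_one) ρ 2
  have hg (ρ : Measure (ℝ × ℝ)) [IsFiniteMeasure ρ] :
      MemLp (fun p : ℝ × ℝ => (ν.fst (Iic p.1)).toReal * (ν.snd (Iic p.2)).toReal) 2 ρ := by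
    simpa only [ENNReal.toReal_mul] using
      memLp_toReal_of_le_one (measurable_measure_Iic_fst_mul_snd ν.fst ν.snd)
        (fun _ => mul_le_one' prob_le_one prob_le_one) ρ 2
  rw [integral_sub_sq (hf _) (hg _), integral_sub_sq (hf _) (hg _)]
  have hmixed := integral_toReal_measure_Iic_mul_marginals ν
  have hproduct := integral_prod_toReal_measure_Iic_mul_sq ν.fst ν.snd
  simp only [mul_assoc]
  linarith
end

section
/- Let (X₃,Y₃) and (X₄,Y₄) be i.i.d. copies of an arbitrary random pair (X,Y) with joint CDF F and marginals F₁, F₂. Then for all x,y ∈ ℝ: P(min(X₃,X₄) ≤ x, min(Y₃,Y₄) ≤ y) = 2F(x,y) + 2F₁(x)F₂(y) − 2F(x,y)F₁(x) − 2F(x,y)F₂(y) + F(x,y)². -/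
open MeasureTheory

/-- For a probability measure and a measurable set, the real probability of a set plus
that of its complement is 1. -/
lemma aux_compl {α : Type*} [MeasurableSpace α] (μ : Measure α) [IsProbabilityMeasure μ]
    {s : Set α} (hs : MeasurableSet s) :
    (μ s).toReal + (μ sᶜ).toReal = 1 := by
  rw [← ENNReal.toReal_add (measure_ne_top μ _) (measure_ne_top μ _),
    measure_add_measure_compl hs, measure_univ, ENNReal.toReal_one]

/-- Inclusion–exclusion in real form. -/
lemma aux_union_inter {α : Type*} [MeasurableSpace α] (μ : Measure α) [IsFiniteMeasure μ]
    (s t : Set α) (ht : MeasurableSet t) :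
    (μ (s ∪ t)).toReal + (μ (s ∩ t)).toReal = (μ s).toReal + (μ t).toReal := by
  rw [← ENNReal.toReal_add (measure_ne_top μ _) (measure_ne_top μ _),
    ← ENNReal.toReal_add (measure_ne_top μ _) (measure_ne_top μ _),
    measure_union_add_inter s ht]

/-- for i.i.d. copies `(X₃,Y₃), (X₄,Y₄)` of an arbitrary pair with law `ν`,
joint CDF `F` and marginals `F₁, F₂`,
`P(min(X₃,X₄) ≤ x, min(Y₃,Y₄) ≤ y) = 2F + 2F₁F₂ − 2FF₁ − 2FF₂ + F²`. -/
theorem min_min_cdf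
    (ν : Measure (ℝ × ℝ)) [IsProbabilityMeasure ν]
    (F : ℝ → ℝ → ℝ) (F₁ F₂ : ℝ → ℝ)
    (hF : ∀ x y, F x y = (ν (Set.Iic x ×ˢ Set.Iic y)).toReal)
    (hF₁ : ∀ x, F₁ x = ((ν.map Prod.fst) (Set.Iic x)).toReal)
    (hF₂ : ∀ y, F₂ y = ((ν.map Prod.snd) (Set.Iic y)).toReal) :
    ∀ x y : ℝ,
      ((ν.prod ν) {q : (ℝ × ℝ) × (ℝ × ℝ) |
          min q.1.1 q.2.1 ≤ x ∧ min q.1.2 q.2.2 ≤ y}).toReal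
        = 2 * F x y + 2 * F₁ x * F₂ y - 2 * F x y * F₁ x - 2 * F x y * F₂ y
          + (F x y) ^ 2 := by
  intro x y
  set μ := ν.prod ν with hμ
  set Sx : Set (ℝ × ℝ) := {p | p.1 ≤ x} with hSx
  set Sy : Set (ℝ × ℝ) := {p | p.2 ≤ y} with hSy
  have mSx : MeasurableSet Sx := measurable_fst measurableSet_Iic
  have mSy : MeasurableSet Sy := measurable_snd measurableSet_Iic
  set a := F₁ x with ha'
  set b := F₂ y with hb'
  set c := F x y with hc'
  -- marginal values
  have ha : (ν Sx).toReal = a := by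
    rw [ha', hF₁, Measure.map_apply measurable_fst measurableSet_Iic]
    rfl
  have hb : (ν Sy).toReal = b := by
    rw [hb', hF₂, Measure.map_apply measurable_snd measurableSet_Iic]
    rfl
  have hc : (ν (Sx ∩ Sy)).toReal = c := by
    rw [hc', hF]
    congr 1
  -- complements
  have haC : (ν Sxᶜ).toReal = 1 - a := by
    have := aux_compl ν mSx; rw [ha] at this; linarith
  have hbC : (ν Syᶜ).toReal = 1 - b := by
    have := aux_compl ν mSy; rw [hb] at this; linarith
  have hT : (ν (Sxᶜ ∩ Syᶜ)).toReal = 1 - a - b + c := by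
    have h1 := aux_union_inter ν Sx Sy mSy
    have h2 := aux_compl ν (mSx.union mSy)
    rw [← Set.compl_union]
    rw [ha, hb, hc] at h1
    linarith
  -- the sets A and B
  set A : Set ((ℝ × ℝ) × (ℝ × ℝ)) := {q | min q.1.1 q.2.1 ≤ x} with hA
  set B : Set ((ℝ × ℝ) × (ℝ × ℝ)) := {q | min q.1.2 q.2.2 ≤ y} with hB
  have hAc : Aᶜ = Sxᶜ ×ˢ Sxᶜ := by
    ext q
    simp [hA, hSx, min_le_iff, not_or, not_le]
  have hBc : Bᶜ = Syᶜ ×ˢ Syᶜ := by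
    ext q
    simp [hB, hSy, min_le_iff, not_or, not_le]
  have hABc : Aᶜ ∩ Bᶜ = (Sxᶜ ∩ Syᶜ) ×ˢ (Sxᶜ ∩ Syᶜ) := by
    rw [hAc, hBc, Set.prod_inter_prod]
  have mA : MeasurableSet A := by
    have : Measurable fun q : (ℝ × ℝ) × (ℝ × ℝ) => min q.1.1 q.2.1 :=
      (measurable_fst.fst).min (measurable_snd.fst)
    exact this measurableSet_Iic
  have mB : MeasurableSet B := by
    have : Measurable fun q : (ℝ × ℝ) × (ℝ × ℝ) => min q.1.2 q.2.2 :=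
      (measurable_fst.snd).min (measurable_snd.snd)
    exact this measurableSet_Iic
  -- measures of A, B, Aᶜ ∩ Bᶜ
  have hμA : (μ A).toReal = 1 - (1 - a) ^ 2 := by
    have h1 := aux_compl μ mA
    have h2 : (μ Aᶜ).toReal = (1 - a) * (1 - a) := by
      rw [hAc, hμ, Measure.prod_prod, ENNReal.toReal_mul, haC]
    nlinarith
  have hμB : (μ B).toReal = 1 - (1 - b) ^ 2 := by
    have h1 := aux_compl μ mB
    have h2 : (μ Bᶜ).toReal = (1 - b) * (1 - b) := by
      rw [hBc, hμ, Measure.prod_prod, ENNReal.toReal_mul, hbC]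
    nlinarith
  have hμC : (μ (Aᶜ ∩ Bᶜ)).toReal = (1 - a - b + c) ^ 2 := by
    rw [hABc, hμ, Measure.prod_prod, ENNReal.toReal_mul, hT]
    ring
  -- inclusion-exclusion for A, B
  have key : (μ (A ∩ B)).toReal + 1
      = (μ A).toReal + (μ B).toReal + (μ (Aᶜ ∩ Bᶜ)).toReal := by
    have h1 := aux_union_inter μ A B mB
    have h2 := aux_compl μ (mA.union mB)
    rw [Set.compl_union] at h2
    linarith
  have hgoal : {q : (ℝ × ℝ) × (ℝ × ℝ) |
      min q.1.1 q.2.1 ≤ x ∧ min q.1.2 q.2.2 ≤ y} = A ∩ B := rfl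
  rw [hgoal]
  rw [hμA, hμB, hμC] at key
  have : (μ (A ∩ B)).toReal = (1 - (1-a)^2) + (1 - (1-b)^2) + (1-a-b+c)^2 - 1 := by
    linarith
  rw [this]
  ring
end

section
/- Let λ_{i,j} = 3/(π⁴ i² j²) for i,j ∈ ℤ⁺ and let λ_{(1)} ≥ λ_{(2)} ≥ ... be these values sorted in decreasing order. Then the tail sums satisfy Σ_{v>K} λ_{(v)} ≍ (log K)²/K as K → ∞, i.e., there exist constants 0 < c < C such that c·(log K)²/K ≤ Σ_{v>K} λ_{(v)} ≤ C·(log K)²/K for all sufficiently large K. -/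
/-!
Up to the factor `3 / π⁴`, `λ_{i,j} = 1 / (i j)²` is a strictly decreasing function of the product
`i j`. So a nonincreasing enumeration first lists the `N(m) = ∑_{i ≤ m} ⌊m / i⌋` pairs with
`i j ≤ m`, and its tail after `N(m)` terms is `T(m) = ∑_{i j > m} 1 / (i j)²`. The harmonic bounds
give `N(m) ≍ m log m`. Row by row, `∑_{j > m / i} 1 / j² ≤ 2 / (⌊m / i⌋ + 1)`, whence
`T(m) ≲ log m / m`; conversely the `N(2m) - N(m) ≳ m log m` pairs with `m < i j ≤ 2m` give
`T(m) ≳ log m / m`. Choosing `m` with `N(m) ≤ K < N(2m)`, the tail after `K` terms lies between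
`T(2m)` and `T(m)`, and `K ≍ m log m` turns `log m / m` into `(log K)² / K`.
-/

open Finset Real

section AntitoneEnumeration

variable {α : Type*} (e : ℕ ≃ α)

theorem Equiv.map_range_card_of_antitone {β : Type*} [LinearOrder β] {f : α → β}
    (hf : Antitone (f ∘ e)) {s : Finset α} (hs : ∀ p ∈ s, ∀ q ∉ s, f q < f p) :
    (range #s).map e.toEmbedding = s := by
  -- whatever is enumerated before an element of `s` lies in `s`
  have hpos : s.map e.symm.toEmbedding ⊆ range #s := by
    intro v hv
    obtain ⟨p, hp, rfl⟩ := mem_map.1 hv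
    have hinit : (range (e.symm p + 1)).map e.toEmbedding ⊆ s := by
      intro q hq
      obtain ⟨u, hu, rfl⟩ := mem_map.1 hq
      by_contra hu'
      have hle : f p ≤ f (e u) := by
        simpa using hf (Nat.lt_succ_iff.1 (mem_range.1 hu))
      exact (hs p hp _ hu').not_ge hle
    simpa using card_le_card hinit
  rw [← eq_of_subset_of_card_le hpos (by simp), map_map]
  simp

theorem tsum_nat_add_card_eq_tsum_indicator_compl {f : α → ℝ} (hsum : Summable f)
    (hf : Antitone (f ∘ e)) {s : Finset α} (hs : ∀ p ∈ s, ∀ q ∉ s, f q < f p) :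
    ∑' v, f (e (v + #s)) = ∑' p, (s : Set α)ᶜ.indicator f p := by
  have hhead : ∑ v ∈ range #s, f (e v) = ∑ p ∈ s, f p := by
    conv_rhs => rw [← e.map_range_card_of_antitone hf hs]
    rw [sum_map]; rfl
  have h₁ := (hsum.comp_injective e.injective).sum_add_tsum_nat_add #s
  have h₂ := hsum.sum_add_tsum_compl (s := s)
  rw [_root_.tsum_subtype] at h₂
  simp only [Function.comp_apply, e.tsum_eq f] at h₁
  linarith

end AntitoneEnumeration

theorem antitone_tsum_nat_add {g : ℕ → ℝ} (hg : Summable g) (h0 : 0 ≤ g) :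
    Antitone fun K => ∑' v, g (v + K) := by
  refine antitone_nat_of_succ_le fun K => ?_
  rw [((summable_nat_add_iff K).2 hg).tsum_eq_zero_add]
  simp only [zero_add, add_right_comm _ 1 K, add_assoc]
  exact le_add_of_nonneg_left (h0 K)

/-- Vanishes when `i = 0` or `j = 0` (as `0⁻¹ = 0`), so sums over `ℕ+ × ℕ+` can be taken over
`ℕ × ℕ`. -/
noncomputable def prodInvSq (q : ℕ × ℕ) : ℝ := ((q.1 : ℝ) ^ 2)⁻¹ * ((q.2 : ℝ) ^ 2)⁻¹

lemma prodInvSq_nonneg (q : ℕ × ℕ) : 0 ≤ prodInvSq q := by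
  unfold prodInvSq; positivity

lemma prodInvSq_eq (q : ℕ × ℕ) : prodInvSq q = (((q.1 * q.2 : ℕ) : ℝ) ^ 2)⁻¹ := by
  simp [prodInvSq, mul_pow, mul_comm]

lemma summable_prodInvSq : Summable prodInvSq :=
  (Real.summable_nat_pow_inv.2 one_lt_two).mul_of_nonneg (Real.summable_nat_pow_inv.2 one_lt_two)
    (fun _ => by positivity) (fun _ => by positivity)

lemma prodInvSq_lt_prodInvSq {q q' : ℕ × ℕ} (hq : 0 < q.1 * q.2) (h : q.1 * q.2 < q'.1 * q'.2) :
    prodInvSq q' < prodInvSq q := by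
  rw [prodInvSq_eq, prodInvSq_eq]
  gcongr

def pairsLE (m : ℕ) : Finset (ℕ × ℕ) := {q ∈ Icc 1 m ×ˢ Icc 1 m | q.1 * q.2 ≤ m}

lemma mem_pairsLE {m : ℕ} {q : ℕ × ℕ} : q ∈ pairsLE m ↔ 0 < q.1 * q.2 ∧ q.1 * q.2 ≤ m := by
  obtain ⟨i, j⟩ := q
  simp only [pairsLE, mem_filter, mem_product, mem_Icc]
  constructor
  · rintro ⟨⟨⟨hi, -⟩, hj, -⟩, h⟩
    exact ⟨Nat.mul_pos hi hj, h⟩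
  · rintro ⟨hpos, h⟩
    have hi := Nat.pos_of_mul_pos_right hpos
    have hj := Nat.pos_of_mul_pos_left hpos
    exact ⟨⟨⟨hi, (Nat.le_mul_of_pos_right i hj).trans h⟩, hj,
      (Nat.le_mul_of_pos_left j hi).trans h⟩, h⟩

lemma pairsLE_mono : Monotone pairsLE := fun _ _ h _ hq =>
  mem_pairsLE.2 ⟨(mem_pairsLE.1 hq).1, (mem_pairsLE.1 hq).2.trans h⟩

lemma card_pairsLE (m : ℕ) : #(pairsLE m) = ∑ i ∈ Icc 1 m, m / i := by
  rw [pairsLE, card_filter, sum_product]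
  refine sum_congr rfl fun i hi => ?_
  have hi : 0 < i := (mem_Icc.1 hi).1
  have hfib : {j ∈ Icc 1 m | i * j ≤ m} = Icc 1 (m / i) := by
    ext j
    simp only [mem_filter, mem_Icc, Nat.le_div_iff_mul_le hi, mul_comm j]
    exact ⟨fun h => ⟨h.1.1, h.2⟩, fun h => ⟨⟨h.1, (Nat.le_mul_of_pos_left j hi).trans h.2⟩, h.2⟩⟩
  rw [← card_filter, hfib, Nat.card_Icc, Nat.add_sub_cancel]

lemma self_le_card_pairsLE (m : ℕ) : m ≤ #(pairsLE m) := by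
  rcases Nat.eq_zero_or_pos m with rfl | hm
  · exact Nat.zero_le _
  · rw [card_pairsLE]
    simpa using single_le_sum (f := fun i => m / i) (fun _ _ => Nat.zero_le _)
      (mem_Icc.2 ⟨le_rfl, hm⟩)

lemma card_pairsLE_le (m : ℕ) : (#(pairsLE m) : ℝ) ≤ m * (1 + log m) := by
  rw [card_pairsLE, Nat.cast_sum]
  calc ∑ i ∈ Icc 1 m, ((m / i : ℕ) : ℝ) ≤ ∑ i ∈ Icc 1 m, m * (i : ℝ)⁻¹ :=
        sum_le_sum fun _ _ => Nat.cast_div_le.trans_eq (div_eq_mul_inv _ _)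
    _ = m * harmonic m := by rw [← mul_sum, harmonic_eq_sum_Icc]; push_cast; rfl
    _ ≤ m * (1 + log m) := by gcongr; exact harmonic_le_one_add_log m

lemma le_card_pairsLE (m : ℕ) : m * (log m - 1) ≤ (#(pairsLE m) : ℝ) := by
  rw [card_pairsLE, Nat.cast_sum]
  calc (m : ℝ) * (log m - 1) ≤ m * (harmonic m - 1) := by
        gcongr
        rcases Nat.eq_zero_or_pos m with rfl | hm
        · simp
        · exact (log_le_log (by positivity) (by simp)).trans (log_add_one_le_harmonic m)
    _ = ∑ i ∈ Icc 1 m, ((m : ℝ) / i - 1) := by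
        rw [sum_sub_distrib, harmonic_eq_sum_Icc]; push_cast
        simp [mul_sub, mul_sum, div_eq_mul_inv]
    _ ≤ ∑ i ∈ Icc 1 m, ((m / i : ℕ) : ℝ) := by
        refine sum_le_sum fun i _ => ?_
        rw [← Nat.floor_div_eq_div (K := ℝ)]
        exact (Nat.sub_one_lt_floor _).le

noncomputable def tailAbove (m : ℕ) : ℝ := ∑' q, {q : ℕ × ℕ | m < q.1 * q.2}.indicator prodInvSq q

lemma sum_filter_lt_inv_sq_le (t : ℕ) (S : Finset ℕ) :
    ∑ j ∈ S with t < j, ((j : ℝ) ^ 2)⁻¹ ≤ 2 / (t + 1) := by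
  refine (sum_le_sum_of_subset_of_nonneg (fun j hj => ?_) fun _ _ _ => by positivity).trans
    (sum_Ioo_inv_sq_le t (S.sup id + 1))
  rw [mem_filter] at hj
  exact mem_Ioo.2 ⟨hj.2, Nat.lt_succ_of_le (le_sup (f := id) hj.1)⟩

lemma sum_filter_le_inv_le (m : ℕ) (S : Finset ℕ) :
    ∑ i ∈ S with i ≤ m, (i : ℝ)⁻¹ ≤ 1 + log m := by
  calc ∑ i ∈ S with i ≤ m, (i : ℝ)⁻¹ ≤ ∑ i ∈ range (m + 1), (i : ℝ)⁻¹ :=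
        sum_le_sum_of_subset_of_nonneg
          (fun i hi => mem_range.2 (Nat.lt_succ_of_le (mem_filter.1 hi).2))
          fun _ _ _ => by positivity
    _ = harmonic m := by simp [sum_range_succ', harmonic]
    _ ≤ 1 + log m := harmonic_le_one_add_log m

lemma sum_indicator_row_le (m i : ℕ) (S : Finset ℕ) :
    ∑ j ∈ S, {q : ℕ × ℕ | m < q.1 * q.2}.indicator prodInvSq (i, j)
      ≤ if i ≤ m then 2 / m * (i : ℝ)⁻¹ else 2 * ((i : ℝ) ^ 2)⁻¹ := by
  rcases Nat.eq_zero_or_pos i with rfl | hi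
  · simp
  have hrow : ∀ j, {q : ℕ × ℕ | m < q.1 * q.2}.indicator prodInvSq (i, j)
      = ((i : ℝ) ^ 2)⁻¹ * if m / i < j then ((j : ℝ) ^ 2)⁻¹ else 0 := by
    intro j
    simp [Set.indicator_apply, prodInvSq, Nat.div_lt_iff_lt_mul hi, mul_comm j]
  have hsum : ∑ j ∈ S, {q : ℕ × ℕ | m < q.1 * q.2}.indicator prodInvSq (i, j)
      ≤ ((i : ℝ) ^ 2)⁻¹ * (2 / ((m / i : ℕ) + 1)) := by
    simp_rw [hrow, ← mul_sum, ← sum_filter]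
    gcongr
    exact sum_filter_lt_inv_sq_le _ _
  refine hsum.trans ?_
  split_ifs with him
  · have : (m : ℝ) ≤ i * ((m / i : ℕ) + 1) := by exact_mod_cast (Nat.lt_mul_div_succ m hi).le
    have hm : 0 < m := hi.trans_le him
    calc ((i : ℝ) ^ 2)⁻¹ * (2 / ((m / i : ℕ) + 1)) = 2 / (i * (i * ((m / i : ℕ) + 1))) := by
          field_simp
      _ ≤ 2 / (i * m) := by gcongr
      _ = 2 / m * (i : ℝ)⁻¹ := by field_simp
  · rw [mul_comm]
    gcongr
    exact div_le_self zero_le_two (by simp)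

lemma tailAbove_le {m : ℕ} (hm : 0 < m) : tailAbove m ≤ 2 * (3 + log m) / m := by
  refine Real.tsum_le_of_sum_le (Set.indicator_nonneg fun q _ => prodInvSq_nonneg q) fun u => ?_
  set S₁ := u.image Prod.fst
  set S₂ := u.image Prod.snd
  calc ∑ q ∈ u, {q : ℕ × ℕ | m < q.1 * q.2}.indicator prodInvSq q
      ≤ ∑ q ∈ S₁ ×ˢ S₂, {q : ℕ × ℕ | m < q.1 * q.2}.indicator prodInvSq q :=
        sum_le_sum_of_subset_of_nonneg subset_product
          fun q _ _ => Set.indicator_nonneg (fun q _ => prodInvSq_nonneg q) q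
    _ = ∑ i ∈ S₁, ∑ j ∈ S₂, {q : ℕ × ℕ | m < q.1 * q.2}.indicator prodInvSq (i, j) :=
        sum_product ..
    _ ≤ ∑ i ∈ S₁, if i ≤ m then 2 / m * (i : ℝ)⁻¹ else 2 * ((i : ℝ) ^ 2)⁻¹ :=
        sum_le_sum fun i _ => sum_indicator_row_le m i S₂
    _ = 2 / m * ∑ i ∈ S₁ with i ≤ m, (i : ℝ)⁻¹ + 2 * ∑ i ∈ S₁ with m < i, ((i : ℝ) ^ 2)⁻¹ := by
        simp only [sum_ite, mul_sum, not_le]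
    _ ≤ 2 / m * (1 + log m) + 2 * (2 / (m + 1)) := by
        gcongr
        · exact sum_filter_le_inv_le m S₁
        · exact sum_filter_lt_inv_sq_le m S₁
    _ ≤ 2 / m * (1 + log m) + 2 * (2 / m) := by
        gcongr
        linarith
    _ = 2 * (3 + log m) / m := by ring

lemma card_sdiff_div_le_tailAbove {m m' : ℕ} :
    (#(pairsLE m' \ pairsLE m) : ℝ) / m' ^ 2 ≤ tailAbove m := by
  calc (#(pairsLE m' \ pairsLE m) : ℝ) / m' ^ 2
        = ∑ q ∈ pairsLE m' \ pairsLE m, ((m' : ℝ) ^ 2)⁻¹ := by simp [div_eq_mul_inv]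
    _ ≤ ∑ q ∈ pairsLE m' \ pairsLE m, {q : ℕ × ℕ | m < q.1 * q.2}.indicator prodInvSq q := by
        refine sum_le_sum fun q hq => ?_
        obtain ⟨hq', hq⟩ := mem_sdiff.1 hq
        obtain ⟨hpos, hle⟩ := mem_pairsLE.1 hq'
        have hlt : m < q.1 * q.2 := by
          by_contra h
          exact hq (mem_pairsLE.2 ⟨hpos, not_lt.1 h⟩)
        rw [Set.indicator_of_mem (show q ∈ {q : ℕ × ℕ | m < q.1 * q.2} from hlt), prodInvSq_eq]
        gcongr
    _ ≤ tailAbove m :=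
        (summable_prodInvSq.indicator _).sum_le_tsum _
          fun q _ => Set.indicator_nonneg (fun q _ => prodInvSq_nonneg q) q

lemma log_sub_three_div_le_tailAbove {m : ℕ} (hm : 0 < m) :
    (log m - 3) / (4 * m) ≤ tailAbove m := by
  have hm' : (0 : ℝ) < m := by exact_mod_cast hm
  have hcard : (#(pairsLE (2 * m) \ pairsLE m) : ℝ) = #(pairsLE (2 * m)) - #(pairsLE m) := by
    have hsub : pairsLE m ⊆ pairsLE (2 * m) := pairsLE_mono (by omega)
    rw [card_sdiff_of_subset hsub, Nat.cast_sub (card_le_card hsub)]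
  have hlower := le_card_pairsLE (2 * m)
  have hupper := card_pairsLE_le m
  have hlog2 : log (2 * m) = log 2 + log m := log_mul two_ne_zero hm'.ne'
  refine le_trans ?_ (card_sdiff_div_le_tailAbove (m' := 2 * m))
  rw [hcard, div_le_div_iff₀ (by positivity) (by positivity)]
  push_cast at hlower ⊢
  rw [hlog2] at hlower
  nlinarith [log_two_gt_d9]

noncomputable def pnatPairsLE (m : ℕ) : Finset (ℕ+ × ℕ+) :=
  (pairsLE m).preimage (Prod.map PNat.val PNat.val)
    (PNat.coe_injective.prodMap PNat.coe_injective).injOn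

lemma mem_pnatPairsLE {m : ℕ} {p : ℕ+ × ℕ+} : p ∈ pnatPairsLE m ↔ (p.1 : ℕ) * p.2 ≤ m := by
  simp [pnatPairsLE, mem_pairsLE, Nat.mul_pos p.1.pos p.2.pos]

lemma mem_range_prodMap_val_of_lt_mul {m : ℕ} {q : ℕ × ℕ} (hq : m < q.1 * q.2) :
    q ∈ Set.range (Prod.map PNat.val PNat.val) := by
  have hpos := (Nat.zero_le m).trans_lt hq
  exact ⟨(⟨q.1, Nat.pos_of_mul_pos_right hpos⟩, ⟨q.2, Nat.pos_of_mul_pos_left hpos⟩), rfl⟩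

lemma card_pnatPairsLE (m : ℕ) : #(pnatPairsLE m) = #(pairsLE m) := by
  classical
  rw [pnatPairsLE, card_preimage, filter_true_of_mem]
  intro q hq
  exact mem_range_prodMap_val_of_lt_mul (mem_pairsLE.1 hq).1

lemma tsum_indicator_compl_pnatPairsLE (m : ℕ) :
    ∑' p, (pnatPairsLE m : Set (ℕ+ × ℕ+))ᶜ.indicator (prodInvSq ∘ Prod.map PNat.val PNat.val) p
      = tailAbove m := by
  have hset : (pnatPairsLE m : Set (ℕ+ × ℕ+))ᶜ
      = Prod.map PNat.val PNat.val ⁻¹' {q : ℕ × ℕ | m < q.1 * q.2} := by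
    ext p
    simp [mem_pnatPairsLE]
  simp_rw [hset, Set.indicator_comp_right]
  exact (PNat.coe_injective.prodMap PNat.coe_injective).tsum_eq
    (Set.support_indicator_subset.trans fun q hq => mem_range_prodMap_val_of_lt_mul hq)

lemma tsum_nat_add_card_pairsLE (e : ℕ ≃ ℕ+ × ℕ+)
    (he : Antitone (prodInvSq ∘ Prod.map PNat.val PNat.val ∘ e)) (m : ℕ) :
    ∑' v, prodInvSq (Prod.map PNat.val PNat.val (e (v + #(pairsLE m)))) = tailAbove m := by
  rw [← card_pnatPairsLE, ← tsum_indicator_compl_pnatPairsLE]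
  refine tsum_nat_add_card_eq_tsum_indicator_compl e
    (summable_prodInvSq.comp_injective (PNat.coe_injective.prodMap PNat.coe_injective)) he ?_
  intro p hp q hq
  rw [mem_pnatPairsLE] at hp hq
  exact prodInvSq_lt_prodInvSq (Nat.mul_pos p.1.pos p.2.pos) (hp.trans_lt (not_le.1 hq))

lemma exists_le_lt_succ {N : ℕ → ℕ} {K : ℕ} (h0 : N 0 ≤ K) (h : ∃ n, K < N n) :
    ∃ m, N m ≤ K ∧ K < N (m + 1) := by
  classical
  have hn : Nat.find h ≠ 0 := fun h' => (h0.trans_lt (h' ▸ Nat.find_spec h)).false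
  refine ⟨Nat.find h - 1, not_lt.1 (Nat.find_min h (by omega)), ?_⟩
  rw [Nat.sub_add_cancel (Nat.one_le_iff_ne_zero.2 hn)]
  exact Nat.find_spec h

lemma log_div_bounds_of_mul_log_bounds {x y : ℝ} (hx : 0 < x) (hy : exp 14 ≤ y)
    (h₁ : x * (log x - 1) ≤ y) (h₂ : y ≤ 2 * x * (1 + log (2 * x))) :
    log y ^ 2 / (288 * y) ≤ (log x - 3) / (8 * x) ∧ 2 * (3 + log x) / x ≤ 12 * log y ^ 2 / y := by
  have hy₀ : 0 < y := (exp_pos 14).trans_le hy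
  have hlog₂ : log (2 * x) = log 2 + log x := log_mul two_ne_zero hx.ne'
  have hlog₂' : log 2 < 1 := log_two_lt_d9.trans (by norm_num)
  have h14 : 14 ≤ log y := (le_log_iff_exp_le hy₀).2 hy
  have hyx : log y ≤ 2 + 2 * log x := by
    have h : y ≤ (2 * x) ^ 2 := by
      nlinarith [log_le_sub_one_of_pos (by positivity : 0 < 2 * x)]
    have := log_le_log hy₀ h
    rw [log_pow, hlog₂] at this
    push_cast at this
    linarith
  have h6 : 6 ≤ log x := by linarith
  have hxy : log x ≤ log y := log_le_log hx (by nlinarith)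
  constructor
  · rw [div_le_div_iff₀ (by positivity) (by positivity)]
    have : log y ^ 2 ≤ 9 * log x ^ 2 := by nlinarith
    nlinarith
  · rw [div_le_div_iff₀ hx hy₀]
    have hy' : y ≤ 2 * x * (2 + log x) := by rw [hlog₂] at h₂; nlinarith
    have hquad : (3 + log x) * (2 + log x) ≤ 3 * log y ^ 2 := by nlinarith
    nlinarith

theorem tsum_nat_add_prodInvSq_bounds (e : ℕ ≃ ℕ+ × ℕ+)
    (he : Antitone (prodInvSq ∘ Prod.map PNat.val PNat.val ∘ e)) {K : ℕ} (hK : exp 14 ≤ K) :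
    log K ^ 2 / (288 * K) ≤ ∑' v, prodInvSq (Prod.map PNat.val PNat.val (e (v + K))) ∧
      ∑' v, prodInvSq (Prod.map PNat.val PNat.val (e (v + K))) ≤ 12 * log K ^ 2 / K := by
  have hanti : Antitone fun K => ∑' v, prodInvSq (Prod.map PNat.val PNat.val (e (v + K))) :=
    antitone_tsum_nat_add ((summable_prodInvSq.comp_injective
      (PNat.coe_injective.prodMap PNat.coe_injective)).comp_injective e.injective)
      fun _ => prodInvSq_nonneg _
  obtain ⟨m, hmK, hKm⟩ := exists_le_lt_succ (N := fun m => #(pairsLE m)) (by simp [pairsLE])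
    ⟨K + 1, self_le_card_pairsLE _⟩
  have hm : 0 < m := by
    refine Nat.pos_of_ne_zero fun hm => ?_
    subst hm
    have hK0 : K = 0 := by simpa [card_pairsLE] using hKm
    exact (exp_pos 14).not_ge (by simpa [hK0] using hK)
  have hK2m : K < #(pairsLE (2 * m)) := hKm.trans_le (card_le_card (pairsLE_mono (by omega)))
  have h₁ : (m : ℝ) * (log m - 1) ≤ K := (le_card_pairsLE m).trans (by exact_mod_cast hmK)
  have h₂ : (K : ℝ) ≤ 2 * m * (1 + log (2 * m)) := by
    have := card_pairsLE_le (2 * m)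
    push_cast at this
    exact (Nat.cast_le.2 hK2m.le).trans (by linarith)
  obtain ⟨hlow, hup⟩ := log_div_bounds_of_mul_log_bounds (by exact_mod_cast hm) hK h₁ h₂
  constructor
  · calc log K ^ 2 / (288 * K) ≤ (log m - 3) / (8 * m) := hlow
      _ ≤ (log (2 * m : ℕ) - 3) / (4 * (2 * m : ℕ)) := by
          push_cast
          rw [show (4 : ℝ) * (2 * m) = 8 * m by ring]
          gcongr
          linarith
      _ ≤ tailAbove (2 * m) := log_sub_three_div_le_tailAbove (by omega)
      _ = _ := (tsum_nat_add_card_pairsLE e he _).symm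
      _ ≤ _ := hanti hK2m.le
  · calc _ ≤ _ := hanti hmK
      _ = tailAbove m := tsum_nat_add_card_pairsLE e he m
      _ ≤ 2 * (3 + log m) / m := tailAbove_le hm
      _ ≤ 12 * log K ^ 2 / K := hup

/-- sorting the eigenvalues `λ_{i,j} = 3/(π⁴ i² j²)` into a nonincreasing
sequence, the tail sums satisfy `Σ_{v>K} λ_{(v)} ≍ (log K)²/K`: for any bijective
enumeration `e : ℕ ≃ ℕ⁺ × ℕ⁺` making `v ↦ λ_{e v}` nonincreasing, there are constants
`0 < c < C` such that for all sufficiently large `K`,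
`c (log K)²/K ≤ Σ_{v ≥ K} λ_{(v)} ≤ C (log K)²/K`. -/
theorem hoeffding_eigenvalue_tail_sums
    (e : ℕ ≃ ℕ+ × ℕ+)
    (hmono : Antitone fun v : ℕ =>
      3 / (Real.pi ^ 4 * ((e v).1 : ℝ) ^ 2 * ((e v).2 : ℝ) ^ 2)) :
    ∃ c C : ℝ, 0 < c ∧ c < C ∧ ∃ K₀ : ℕ, ∀ K : ℕ, K₀ ≤ K →
      c * (Real.log K) ^ 2 / K
          ≤ (∑' v : ℕ, 3 / (Real.pi ^ 4 * ((e (v + K)).1 : ℝ) ^ 2 * ((e (v + K)).2 : ℝ) ^ 2)) ∧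
      (∑' v : ℕ, 3 / (Real.pi ^ 4 * ((e (v + K)).1 : ℝ) ^ 2 * ((e (v + K)).2 : ℝ) ^ 2))
          ≤ C * (Real.log K) ^ 2 / K := by
  have hterm : ∀ p : ℕ+ × ℕ+, 3 / (π ^ 4 * (p.1 : ℝ) ^ 2 * (p.2 : ℝ) ^ 2)
      = 3 / π ^ 4 * prodInvSq (Prod.map PNat.val PNat.val p) := by
    intro p
    simp only [prodInvSq, Prod.map_fst, Prod.map_snd]
    ring
  have hc : 0 < 3 / π ^ 4 := by positivity
  have he : Antitone (prodInvSq ∘ Prod.map PNat.val PNat.val ∘ e) := fun u v huv => by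
    have := hmono huv
    simp only [hterm] at this
    exact le_of_mul_le_mul_left this hc
  refine ⟨3 / π ^ 4 / 288, 3 / π ^ 4 * 12, by positivity, by linarith, ⌈exp 14⌉₊, fun K hK => ?_⟩
  obtain ⟨hlow, hup⟩ := tsum_nat_add_prodInvSq_bounds e he (Nat.ceil_le.1 hK)
  simp only [hterm, tsum_mul_left]
  constructor
  · calc 3 / π ^ 4 / 288 * log K ^ 2 / K = 3 / π ^ 4 * (log K ^ 2 / (288 * K)) := by ring
      _ ≤ _ := mul_le_mul_of_nonneg_left hlow hc.le
  · calc _ ≤ 3 / π ^ 4 * (12 * log K ^ 2 / K) := mul_le_mul_of_nonneg_left hup hc.le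
      _ = _ := by ring
end
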